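/- arXiv:1711.02066 — 13 statements merged into one kernel-verified Lean document; each statement's English description precedes it below -/
import Mathlib

section
/- Let (P*, ℓ*, t*) be a maximizer of Problem P1-A. Then for every sensor n the energy constraint is tight: α_n ℓ*_n + (t*_n/g_n)·f(ℓ*_n/(R_n t*_n)) = η g_n P*_n T₀. (Lemma 2, energy part: each sensor fully utilizes the transferred energy at the optimum.) -/
open Finset

/-- f(x) = N₀ (2^{x/B} − 1), the transmission power needed for rate x. -/
noncomputable def fTx (N₀ B x : ℝ) : ℝ := N₀ * ((2 : ℝ) ^ (x / B) - 1)

/-- Feasibility for problem P1-A (fixed compression ratios `R`). -/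
def FeasibleP1A {N : ℕ} (g α β R : Fin N → ℝ) (η T T₀ P₀ N₀ B : ℝ)
    (P ℓ t : Fin N → ℝ) : Prop :=
  (∀ n, 0 ≤ P n) ∧ (∀ n, 0 ≤ ℓ n) ∧ (∀ n, 0 < t n ∧ t n ≤ T) ∧
  (∑ n, P n ≤ P₀) ∧
  (∀ n, β n * ℓ n + t n ≤ T) ∧
  (∀ n, α n * ℓ n + (t n / g n) * fTx N₀ B (ℓ n / (R n * t n)) ≤ η * g n * P n * T₀)

/-- The operator's reward in problem P1-A. -/
noncomputable def rewardP1A {N : ℕ} (a : Fin N → ℝ) (c T₀ : ℝ)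
    (P ℓ : Fin N → ℝ) : ℝ :=
  (∑ n, a n * Real.log (1 + ℓ n)) - c * ∑ n, P n * T₀

/-!
If sensor `m` had slack in its energy constraint, lowering its wireless power `P m` to the value
making the constraint tight keeps every constraint satisfied (the sum-power budget only gets looser)
and strictly lowers the operator's energy cost `c ∑ Pₙ T₀`, contradicting optimality. The lowered
power is nonnegative because the energy a sensor spends is nonnegative.
-/

lemma fTx_nonneg {N₀ B x : ℝ} (hN₀ : 0 ≤ N₀) (hB : 0 ≤ B) (hx : 0 ≤ x) : 0 ≤ fTx N₀ B x :=
  mul_nonneg hN₀ (sub_nonneg.2 (Real.one_le_rpow one_le_two (div_nonneg hx hB)))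

lemma sensing_energy_nonneg {α ℓ t g R N₀ B : ℝ} (hα : 0 ≤ α) (hℓ : 0 ≤ ℓ) (ht : 0 ≤ t)
    (hg : 0 ≤ g) (hR : 0 ≤ R) (hN₀ : 0 ≤ N₀) (hB : 0 ≤ B) :
    0 ≤ α * ℓ + t / g * fTx N₀ B (ℓ / (R * t)) := by
  have := fTx_nonneg hN₀ hB (div_nonneg hℓ (mul_nonneg hR ht))
  positivity

lemma FeasibleP1A.update_power {N : ℕ} {g α β R : Fin N → ℝ} {η T T₀ P₀ N₀ B : ℝ}
    {P ℓ t : Fin N → ℝ} (h : FeasibleP1A g α β R η T T₀ P₀ N₀ B P ℓ t) {m : Fin N} {p : ℝ}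
    (hp : 0 ≤ p) (hpP : p ≤ P m)
    (henergy : α m * ℓ m + (t m / g m) * fTx N₀ B (ℓ m / (R m * t m)) ≤ η * g m * p * T₀) :
    FeasibleP1A g α β R η T T₀ P₀ N₀ B (Function.update P m p) ℓ t := by
  obtain ⟨hP, hℓ, ht, hsum, htime, hen⟩ := h
  refine ⟨?_, hℓ, ht, ?_, htime, ?_⟩
  · exact Function.forall_update_iff P (p := fun _ x => 0 ≤ x) |>.2 ⟨hp, fun n _ => hP n⟩
  · exact (Fintype.sum_mono (update_le_self_iff.2 hpP)).trans hsum
  · intro n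
    rcases eq_or_ne n m with rfl | hnm
    · simpa using henergy
    · simpa [Function.update_of_ne hnm] using hen n

lemma rewardP1A_strictAnti {N : ℕ} {a : Fin N → ℝ} {c T₀ : ℝ} (hc : 0 < c) (hT₀ : 0 < T₀)
    (ℓ : Fin N → ℝ) : StrictAnti fun P ↦ rewardP1A a c T₀ P ℓ := by
  intro P' P hPP'
  have hsum : ∑ n, P' n < ∑ n, P n := Fintype.sum_strictMono hPP'
  simp only [rewardP1A, ← Finset.sum_mul]
  gcongr

theorem energy_constraint_tight_at_optimum_general {N : ℕ}
    (a g α β R : Fin N → ℝ) (c η T T₀ P₀ N₀ B : ℝ)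
    (hc : 0 < c) (hη0 : 0 < η)
    (hg : ∀ n, 0 < g n) (hα : ∀ n, 0 < α n)
    (hR : ∀ n, 1 ≤ R n) (hT₀ : 0 < T₀)
    (hN₀ : 0 < N₀) (hB : 0 < B)
    (P ℓ t : Fin N → ℝ)
    (hfeas : FeasibleP1A g α β R η T T₀ P₀ N₀ B P ℓ t)
    (hopt : ∀ P' ℓ' t', FeasibleP1A g α β R η T T₀ P₀ N₀ B P' ℓ' t' →
      rewardP1A a c T₀ P' ℓ' ≤ rewardP1A a c T₀ P ℓ) :
    ∀ n, α n * ℓ n + (t n / g n) * fTx N₀ B (ℓ n / (R n * t n))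
      = η * g n * P n * T₀ := by
  have ⟨_, hℓ, ht, _, _, hen⟩ := hfeas
  intro m
  set E := α m * ℓ m + (t m / g m) * fTx N₀ B (ℓ m / (R m * t m))
  by_contra hne
  have hslack : E < η * g m * P m * T₀ := (hen m).lt_of_ne hne
  have hscale : 0 < η * g m * T₀ := by have := hg m; positivity
  set p := E / (η * g m * T₀)
  have hEp : E = η * g m * p * T₀ := by
    rw [mul_right_comm _ p, mul_comm, div_mul_cancel₀ E hscale.ne']
  have hp0 : 0 ≤ p := div_nonneg (sensing_energy_nonneg (hα m).le (hℓ m) (ht m).1.le (hg m).le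
    (zero_le_one.trans (hR m)) hN₀.le hB.le) hscale.le
  have hpP : p < P m := by
    rw [div_lt_iff₀ hscale]; linarith
  have hfeas' := hfeas.update_power hp0 hpP.le hEp.le
  exact (hopt _ _ _ hfeas').not_gt
    (rewardP1A_strictAnti hc hT₀ ℓ (update_lt_self_iff.2 hpP))

/-- Lemma 2, energy part: at any maximizer of P1-A the energy
constraint of every sensor is tight. -/
theorem energy_constraint_tight_at_optimum {N : ℕ}
    (a g α β R : Fin N → ℝ) (c η T T₀ P₀ N₀ B : ℝ)
    (ha : ∀ n, 0 < a n) (hc : 0 < c) (hη0 : 0 < η) (hη1 : η ≤ 1)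
    (hg : ∀ n, 0 < g n) (hα : ∀ n, 0 < α n) (hβ : ∀ n, 0 < β n)
    (hR : ∀ n, 1 ≤ R n) (hT : 0 < T) (hT₀ : 0 < T₀) (hP₀ : 0 < P₀)
    (hN₀ : 0 < N₀) (hB : 0 < B)
    (P ℓ t : Fin N → ℝ)
    (hfeas : FeasibleP1A g α β R η T T₀ P₀ N₀ B P ℓ t)
    (hopt : ∀ P' ℓ' t', FeasibleP1A g α β R η T T₀ P₀ N₀ B P' ℓ' t' →
      rewardP1A a c T₀ P' ℓ' ≤ rewardP1A a c T₀ P ℓ) :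
    ∀ n, α n * ℓ n + (t n / g n) * fTx N₀ B (ℓ n / (R n * t n))
      = η * g n * P n * T₀ :=
  energy_constraint_tight_at_optimum_general a g α β R c η T T₀ P₀ N₀ B hc hη0 hg hα hR hT₀ hN₀ hB P
    ℓ t hfeas hopt
end

section
/- Let (P, ℓ, t) be a feasible point of Problem P1-A such that for some sensor n both constraints are strictly slack: β_n ℓ_n + t_n < T and α_n ℓ_n + (t_n/g_n)·f(ℓ_n/(R_n t_n)) < η g_n P_n T₀. Then (P, ℓ, t) is not a maximizer of the reward: there exists another feasible point with strictly larger reward, obtained by increasing ℓ_n. (Lemma 2, time part.) -/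
open Finset

/-! Both slack constraints are strict inequalities between continuous functions of `ℓ n`, so
they survive a small increase of `ℓ n`; the other sensors are untouched, and the reward grows
because `log (1 + ·)` is strictly increasing and `a n > 0`. -/

open Filter Function

@[fun_prop]
theorem continuous_fTx (N₀ B : ℝ) : Continuous (fTx N₀ B) := by
  unfold fTx
  fun_prop (disch := norm_num)

theorem FeasibleP1A.update {N : ℕ} {g α β R : Fin N → ℝ} {η T T₀ P₀ N₀ B : ℝ}
    {P ℓ t : Fin N → ℝ} (h : FeasibleP1A g α β R η T T₀ P₀ N₀ B P ℓ t) {n : Fin N} {x : ℝ}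
    (hx : 0 ≤ x) (htime : β n * x + t n ≤ T)
    (henergy : α n * x + (t n / g n) * fTx N₀ B (x / (R n * t n)) ≤ η * g n * P n * T₀) :
    FeasibleP1A g α β R η T T₀ P₀ N₀ B P (update ℓ n x) t := by
  obtain ⟨hP, hℓ, ht, hsum, htime', henergy'⟩ := h
  refine ⟨hP, ?_, ht, hsum, ?_, ?_⟩
  · exact (forall_update_iff ℓ fun _ y => 0 ≤ y).2 ⟨hx, fun m _ => hℓ m⟩
  · exact (forall_update_iff ℓ fun m y => β m * y + t m ≤ T).2 ⟨htime, fun m _ => htime' m⟩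
  · exact (forall_update_iff ℓ fun m y =>
      α m * y + (t m / g m) * fTx N₀ B (y / (R m * t m)) ≤ η * g m * P m * T₀).2
      ⟨henergy, fun m _ => henergy' m⟩

theorem rewardP1A_lt_update {N : ℕ} {a : Fin N → ℝ} {c T₀ : ℝ} {P ℓ : Fin N → ℝ} {n : Fin N}
    {x : ℝ} (ha : 0 < a n) (hℓ : 0 ≤ ℓ n) (hx : ℓ n < x) :
    rewardP1A a c T₀ P ℓ < rewardP1A a c T₀ P (update ℓ n x) := by
  have hlog : a n * Real.log (1 + ℓ n) < a n * Real.log (1 + x) :=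
    mul_lt_mul_of_pos_left (Real.log_lt_log (by linarith) (by linarith)) ha
  unfold rewardP1A
  gcongr ?_ - _
  refine Finset.sum_lt_sum (fun m _ => ?_) ⟨n, mem_univ n, by simpa using hlog⟩
  rcases eq_or_ne m n with rfl | hmn
  · simpa using hlog.le
  · simp [update_of_ne hmn]

theorem slack_point_not_optimal_general {N : ℕ}
    (a g α β R : Fin N → ℝ) (c η T T₀ P₀ N₀ B : ℝ)
    (ha : ∀ n, 0 < a n)
    (P ℓ t : Fin N → ℝ)
    (hfeas : FeasibleP1A g α β R η T T₀ P₀ N₀ B P ℓ t)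
    (n : Fin N)
    (hslack_time : β n * ℓ n + t n < T)
    (hslack_energy : α n * ℓ n + (t n / g n) * fTx N₀ B (ℓ n / (R n * t n))
      < η * g n * P n * T₀) :
    ∃ ℓ' : Fin N → ℝ, FeasibleP1A g α β R η T T₀ P₀ N₀ B P ℓ' t ∧
      rewardP1A a c T₀ P ℓ < rewardP1A a c T₀ P ℓ' ∧
      ℓ n < ℓ' n ∧ ∀ m, m ≠ n → ℓ' m = ℓ m := by
  have hslack : ∀ᶠ x in nhds (ℓ n), β n * x + t n < T ∧
      α n * x + (t n / g n) * fTx N₀ B (x / (R n * t n)) < η * g n * P n * T₀ :=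
    ((by fun_prop : ContinuousAt (fun x => β n * x + t n) (ℓ n)).eventually_lt
        continuousAt_const hslack_time).and
      ((by fun_prop : ContinuousAt
          (fun x => α n * x + (t n / g n) * fTx N₀ B (x / (R n * t n))) (ℓ n)).eventually_lt
        continuousAt_const hslack_energy)
  obtain ⟨x, hx, htime, henergy⟩ := hslack.exists_gt
  have hℓ : 0 ≤ ℓ n := hfeas.2.1 n
  exact ⟨update ℓ n x, hfeas.update (by linarith) htime.le henergy.le,
    rewardP1A_lt_update (ha n) hℓ hx, by simpa using hx, fun m hm => update_of_ne hm x ℓ⟩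

/-- Lemma 2, time part: a feasible point of P1-A at which some
sensor n has both its time and energy constraints strictly slack is not a
maximizer: increasing ℓ_n gives a feasible point with strictly larger reward. -/
theorem slack_point_not_optimal {N : ℕ}
    (a g α β R : Fin N → ℝ) (c η T T₀ P₀ N₀ B : ℝ)
    (ha : ∀ n, 0 < a n) (hc : 0 < c) (hη0 : 0 < η) (hη1 : η ≤ 1)
    (hg : ∀ n, 0 < g n) (hα : ∀ n, 0 < α n) (hβ : ∀ n, 0 < β n)
    (hR : ∀ n, 1 ≤ R n) (hT : 0 < T) (hT₀ : 0 < T₀) (hP₀ : 0 < P₀)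
    (hN₀ : 0 < N₀) (hB : 0 < B)
    (P ℓ t : Fin N → ℝ)
    (hfeas : FeasibleP1A g α β R η T T₀ P₀ N₀ B P ℓ t)
    (n : Fin N)
    (hslack_time : β n * ℓ n + t n < T)
    (hslack_energy : α n * ℓ n + (t n / g n) * fTx N₀ B (ℓ n / (R n * t n))
      < η * g n * P n * T₀) :
    ∃ ℓ' : Fin N → ℝ, FeasibleP1A g α β R η T T₀ P₀ N₀ B P ℓ' t ∧
      rewardP1A a c T₀ P ℓ < rewardP1A a c T₀ P ℓ' ∧
      ℓ n < ℓ' n ∧ ∀ m, m ≠ n → ℓ' m = ℓ m :=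
  slack_point_not_optimal_general a g α β R c η T T₀ P₀ N₀ B ha P ℓ t hfeas n hslack_time
    hslack_energy
end

section
/- For any constants T > 0, B > 0, R > 0, β > 0, N₀ > 0, the function t ↦ t·N₀·(2^{(T−t)/(B R β t)} − 1) is strictly convex on the interval (0, T); its second derivative equals N₀·(T ln 2)²/((B R β)²·t³)·2^{(T−t)/(B R β t)} > 0. (Key computation establishing the convexity of Problem P2, Lemma 3.) -/
/-!
With `c = B R β`, the exponent is `(T - t) / (c t) = (T / t - 1) / c`, so the energy is the
perspective `t ↦ t φ (T / t)` of `φ s = N₀ (2 ^ ((s - 1) / c) - 1)`. For any twice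
differentiable `φ`, the perspective `t ↦ t φ (a / t)` has second derivative `a² / t³ · φ'' (a / t)`,
which is positive for `t > 0` as soon as `φ'' > 0` and `a ≠ 0`.
-/

open Real Set

section Perspective

variable {φ φ' φ'' : ℝ → ℝ} {a t d : ℝ}

theorem hasDerivAt_const_div_self (a : ℝ) (ht : t ≠ 0) :
    HasDerivAt (fun t => a / t) (-(a / t ^ 2)) t := by
  simpa only [div_eq_mul_inv, mul_neg] using (hasDerivAt_inv ht).const_mul a

theorem hasDerivAt_perspective (hφ : HasDerivAt φ d (a / t)) (ht : t ≠ 0) :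
    HasDerivAt (fun t => t * φ (a / t)) (φ (a / t) - a / t * d) t := by
  refine ((hasDerivAt_id t).mul (hφ.comp t (hasDerivAt_const_div_self a ht))).congr_deriv ?_
  simp only [id, Function.comp_apply, one_mul]
  field_simp
  ring

theorem hasDerivAt_deriv_perspective (hφ : ∀ s, HasDerivAt φ (φ' s) s)
    (hφ' : HasDerivAt φ' d (a / t)) (ht : t ≠ 0) :
    HasDerivAt (fun t => φ (a / t) - a / t * φ' (a / t)) (a ^ 2 / t ^ 3 * d) t := by
  have hq := hasDerivAt_const_div_self a ht
  refine (((hφ (a / t)).comp t hq).sub (hq.mul (hφ'.comp t hq))).congr_deriv ?_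
  simp only [Function.comp_apply]
  field_simp
  ring

theorem deriv_deriv_perspective (hφ : ∀ s, HasDerivAt φ (φ' s) s)
    (hφ' : HasDerivAt φ' d (a / t)) (ht : t ≠ 0) :
    deriv (deriv fun t => t * φ (a / t)) t = a ^ 2 / t ^ 3 * d := by
  have hderiv : deriv (fun t => t * φ (a / t)) =ᶠ[nhds t]
      fun t => φ (a / t) - a / t * φ' (a / t) := by
    filter_upwards [eventually_ne_nhds ht] with s hs
    exact (hasDerivAt_perspective (hφ _) hs).deriv
  rw [hderiv.deriv_eq]
  exact (hasDerivAt_deriv_perspective hφ hφ' ht).deriv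

theorem strictConvexOn_perspective (hφ : ∀ s, HasDerivAt φ (φ' s) s)
    (hφ' : ∀ s, HasDerivAt φ' (φ'' s) s) (hφ''_pos : ∀ s, 0 < φ'' s) (ha : a ≠ 0) :
    StrictConvexOn ℝ (Ioi 0) (fun t => t * φ (a / t)) := by
  refine strictConvexOn_of_deriv2_pos' (convex_Ioi 0) ?_ fun t (ht : 0 < t) => ?_
  · exact fun t (ht : 0 < t) =>
      (hasDerivAt_perspective (hφ _) ht.ne').continuousAt.continuousWithinAt
  · rw [Function.iterate_succ_apply, Function.iterate_one,
      deriv_deriv_perspective hφ (hφ' _) ht.ne']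
    have := hφ''_pos (a / t)
    positivity

end Perspective

theorem hasDerivAt_rpow_sub_one_div {b : ℝ} (hb : 0 < b) (c s : ℝ) :
    HasDerivAt (fun s => b ^ ((s - 1) / c)) (log b / c * b ^ ((s - 1) / c)) s := by
  refine ((((hasDerivAt_id s).sub_const 1).div_const c).const_rpow hb).congr_deriv ?_
  simp only [id]
  ring

/-- Lemma 3, key computation: for T, B, R, β, N₀ > 0, the
transmission-energy function t ↦ t·N₀·(2^{(T−t)/(BRβt)} − 1) is strictly
convex on (0, T), and its second derivative equals
N₀ (T ln 2)² / ((BRβ)² t³) · 2^{(T−t)/(BRβt)} > 0 there. -/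
theorem transmission_energy_strictly_convex
    (T B R β N₀ : ℝ) (hT : 0 < T) (hB : 0 < B) (hR : 0 < R)
    (hβ : 0 < β) (hN₀ : 0 < N₀) :
    StrictConvexOn ℝ (Set.Ioo 0 T)
      (fun t : ℝ => t * N₀ * ((2 : ℝ) ^ ((T - t) / (B * R * β * t)) - 1)) ∧
    ∀ t ∈ Set.Ioo (0 : ℝ) T,
      deriv (deriv
          (fun t : ℝ => t * N₀ * ((2 : ℝ) ^ ((T - t) / (B * R * β * t)) - 1))) t
        = N₀ * (T * Real.log 2) ^ 2 / ((B * R * β) ^ 2 * t ^ 3)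
            * (2 : ℝ) ^ ((T - t) / (B * R * β * t)) ∧
      0 < N₀ * (T * Real.log 2) ^ 2 / ((B * R * β) ^ 2 * t ^ 3)
            * (2 : ℝ) ^ ((T - t) / (B * R * β * t)) := by
  set c := B * R * β
  have hc : 0 < c := by positivity
  have hexp : ∀ t ≠ 0, (T - t) / (c * t) = (T / t - 1) / c := by
    intro t ht
    field_simp
  have h2 := hasDerivAt_rpow_sub_one_div (b := 2) two_pos c
  have hφ : ∀ s, HasDerivAt (fun s => N₀ * ((2 : ℝ) ^ ((s - 1) / c) - 1))
      (N₀ * (log 2 / c * 2 ^ ((s - 1) / c))) s :=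
    fun s => ((h2 s).sub_const 1).const_mul N₀
  have hφ' : ∀ s, HasDerivAt (fun s => N₀ * (log 2 / c * (2 : ℝ) ^ ((s - 1) / c)))
      (N₀ * (log 2 / c * (log 2 / c * 2 ^ ((s - 1) / c)))) s :=
    fun s => ((h2 s).const_mul _).const_mul N₀
  have hfun : (fun t => t * N₀ * ((2 : ℝ) ^ ((T - t) / (c * t)) - 1))
      = fun t => t * (N₀ * ((2 : ℝ) ^ ((T / t - 1) / c) - 1)) := by
    funext t
    rcases eq_or_ne t 0 with rfl | ht
    · simp
    · rw [hexp t ht, mul_assoc]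
  rw [hfun]
  refine ⟨(strictConvexOn_perspective hφ hφ' (fun s => by positivity) hT.ne').subset
    Ioo_subset_Ioi_self (convex_Ioo 0 T), fun t ht => ⟨?_, ?_⟩⟩
  · rw [deriv_deriv_perspective hφ (hφ' _) ht.1.ne', hexp t ht.1.ne']
    field_simp
  · have := ht.1
    positivity
end

section
/- Define L(t) = (λ+c)·[α(T−t)/(η β g) + (t/(η g²))·N₀·(2^{(T−t)/(B R β t)} − 1)] − a·log(1 + (T−t)/β). Then L is convex on the interval (0, T). (Lemma 3: Problem P2, whose objective is the sum of such terms over the sensors subject to linear and convex constraints, is a convex optimization problem.) -/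
/-!
Put `P u = α u / (η g) + N₀ / (η g²) · (2^{u / (B R)} - 1)`, the energy spent per unit of
transmission time at rate `u`; it is convex in `u`. A sensor transmitting for time `t` sends
`(T - t) / β` bits at rate `(T / t - 1) / β`, which is affine in `1 / t`, so the energy term of
`L` is `t · P((T / t - 1) / β)`, the perspective `t ↦ t f(1 / t)` of a convex function, hence
convex. The utility term is `-a` times the logarithm of a positive affine function of `t`,
hence convex as well.
-/

open Set Real

theorem ConvexOn.comp_mul_add {f : ℝ → ℝ} {s : Set ℝ} (hf : ConvexOn ℝ s f) (m b : ℝ) :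
    ConvexOn ℝ ((fun x => m * x + b) ⁻¹' s) (fun x => f (m * x + b)) :=
  hf.comp_affineMap ((LinearMap.mulLeft ℝ m).toAffineMap + AffineMap.const ℝ ℝ b)

theorem ConcaveOn.comp_mul_add {f : ℝ → ℝ} {s : Set ℝ} (hf : ConcaveOn ℝ s f) (m b : ℝ) :
    ConcaveOn ℝ ((fun x => m * x + b) ⁻¹' s) (fun x => f (m * x + b)) :=
  hf.comp_affineMap ((LinearMap.mulLeft ℝ m).toAffineMap + AffineMap.const ℝ ℝ b)

theorem ConvexOn.mul_comp_inv {f : ℝ → ℝ} (hf : ConvexOn ℝ (Ioi 0) f) :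
    ConvexOn ℝ (Ioi 0) (fun t => t * f t⁻¹) := by
  refine ⟨convex_Ioi 0, fun x (hx : 0 < x) y (hy : 0 < y) a b ha hb hab => ?_⟩
  have hz : 0 < a * x + b * y := convex_Ioi (0 : ℝ) hx hy ha hb hab
  -- `(a x + b y)⁻¹` is the convex combination of `x⁻¹`, `y⁻¹` with weights proportional to `a x`, `b y`
  have hw : a * x / (a * x + b * y) + b * y / (a * x + b * y) = 1 := by
    field_simp
  have hinv : (a * x / (a * x + b * y)) • x⁻¹ + (b * y / (a * x + b * y)) • y⁻¹
      = (a * x + b * y)⁻¹ := by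
    simp only [smul_eq_mul]
    field_simp
    exact hab
  have key := hf.2 (inv_pos.2 hx) (inv_pos.2 hy) (by positivity) (by positivity) hw
  rw [hinv] at key
  simp only [smul_eq_mul] at key ⊢
  calc (a * x + b * y) * f (a * x + b * y)⁻¹
      ≤ (a * x + b * y) * (a * x / (a * x + b * y) * f x⁻¹ + b * y / (a * x + b * y) * f y⁻¹) :=
        mul_le_mul_of_nonneg_left key hz.le
    _ = a * (x * f x⁻¹) + b * (y * f y⁻¹) := by field_simp

theorem concaveOn_log_one_add_sub_div {β : ℝ} (hβ : 0 < β) (T : ℝ) :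
    ConcaveOn ℝ (Iio T) (fun t => log (1 + (T - t) / β)) := by
  have harg : ∀ t, -1 / β * t + (1 + T / β) = 1 + (T - t) / β := fun t => by ring
  refine ((strictConcaveOn_log_Ioi.concaveOn.comp_mul_add (-1 / β) (1 + T / β)).subset
    (fun t (ht : t < T) => ?_) (convex_Iio T)).congr (fun t _ => by simp only [harg])
  rw [mem_preimage, harg]
  have := sub_pos.2 ht
  exact mem_Ioi.2 (by positivity)

theorem partial_lagrangian_convex_general
    (a c lam α β η g R T N₀ B : ℝ)
    (ha : 0 < a) (hc : 0 < c) (hlam : 0 ≤ lam) (hβ : 0 < β)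
    (hη : 0 < η) (hN₀ : 0 < N₀) :
    ConvexOn ℝ (Set.Ioo 0 T)
      (fun t : ℝ =>
        (lam + c) * (α * (T - t) / (η * β * g)
          + (t / (η * g ^ 2)) * (N₀ * ((2 : ℝ) ^ ((T - t) / (B * R * β * t)) - 1)))
        - a * Real.log (1 + (T - t) / β)) := by
  have hpower : ConvexOn ℝ univ
      (fun u => α / (η * g) * u + N₀ / (η * g ^ 2) * (((2 : ℝ) ^ (B * R)⁻¹) ^ u - 1)) :=
    (LinearMap.convexOn (LinearMap.mulLeft ℝ (α / (η * g))) convex_univ).add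
      (((convexOn_rpow_left (by positivity)).add_const (-1)).smul (by positivity))
  have henergy := ((hpower.comp_mul_add (T / β) (-1 / β)).subset (subset_univ _)
    (convex_Ioi 0)).mul_comp_inv
  have hlog := (concaveOn_log_one_add_sub_div hβ T).subset Ioo_subset_Iio_self (convex_Ioo 0 T)
  refine (((henergy.subset Ioo_subset_Ioi_self (convex_Ioo 0 T)).smul (add_nonneg hlam hc.le)).sub
    (hlog.smul ha.le)).congr fun t ht => ?_
  have ht0 : t ≠ 0 := ht.1.ne'
  have hexp : (B * R)⁻¹ * (T / β * t⁻¹ + -1 / β) = (T - t) / (B * R * β * t) := by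
    rw [div_eq_mul_inv (T - t), mul_inv, mul_inv, mul_inv]
    field_simp
    ring
  have hrate : t * (T / β * t⁻¹ + -1 / β) = (T - t) / β := by
    field_simp
    ring
  simp only [Pi.sub_apply, smul_eq_mul]
  rw [← rpow_mul zero_le_two, hexp]
  linear_combination (lam + c) * α / (η * g) * hrate

/-- Lemma 3: the single-sensor partial Lagrangian
L(t) = (λ+c)·[α(T−t)/(ηβg) + (t/(ηg²))·N₀·(2^{(T−t)/(BRβt)} − 1)]
        − a·log(1 + (T−t)/β)
of problem P2 is convex on (0, T). -/
theorem partial_lagrangian_convex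
    (a c lam α β η g R T N₀ B : ℝ)
    (ha : 0 < a) (hc : 0 < c) (hlam : 0 ≤ lam) (hα : 0 < α) (hβ : 0 < β)
    (hη : 0 < η) (hg : 0 < g) (hR : 1 ≤ R) (hT : 0 < T) (hN₀ : 0 < N₀)
    (hB : 0 < B) :
    ConvexOn ℝ (Set.Ioo 0 T)
      (fun t : ℝ =>
        (lam + c) * (α * (T - t) / (η * β * g)
          + (t / (η * g ^ 2)) * (N₀ * ((2 : ℝ) ^ ((T - t) / (B * R * β * t)) - 1)))
        - a * Real.log (1 + (T - t) / β)) :=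
  partial_lagrangian_convex_general a c lam α β η g R T N₀ B ha hc hlam hβ hη hN₀
end

section
/- Define L(t) = (λ+c)·[α(T−t)/(η β g) + (t/(η g²))·N₀·(2^{(T−t)/(B R β t)} − 1)] − a·log(1 + (T−t)/β). A point t* ∈ (0, T) is a minimizer of L over (0, T) if and only if it satisfies the stationarity equation ((λ+c)·N₀/(η g²))·[(1 − T ln 2/(B R β t*))·2^{(T−t*)/(B R β t*)} − 1] + a/(β + T − t*) − (λ+c)·α/(η g β) = 0. (Proposition 1: optimal sensor-transmission duration.) -/
/-!
On `(0, T)` the Lagrangian is differentiable and its derivative is the left-hand side of the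
stationarity equation. That derivative is nondecreasing: the rate term
`t * (2 ^ ((T - t) / (B R β t)) - 1)` (a perspective of an exponential) has derivative
`(1 - T log 2 / (B R β t)) * 2 ^ ((T - t) / (B R β t)) - 1`, whose own derivative
`2 ^ ((T - t) / (B R β t)) * (T log 2)² / ((B R β)² t³)` is nonnegative for `t > 0`, and
`a / (β + T - t)` increases in `t`. So the Lagrangian is convex on the open interval, where
minimizers are exactly the critical points.
-/
open Real Set

theorem isMinOn_iff_eq_zero_of_hasDerivAt_of_monotoneOn {S : Set ℝ} {f f' : ℝ → ℝ} {x : ℝ}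
    (hS : IsOpen S) (hSc : Convex ℝ S) (hf : ∀ t ∈ S, HasDerivAt f (f' t) t)
    (hf' : MonotoneOn f' S) (hx : x ∈ S) :
    IsMinOn f S x ↔ f' x = 0 := by
  refine ⟨fun hmin ↦ (hmin.isLocalMin (hS.mem_nhds hx)).hasDerivAt_eq_zero (hf x hx),
    fun hzero ↦ ?_⟩
  have hconv : ConvexOn ℝ S f := by
    refine MonotoneOn.convexOn_of_deriv hSc (fun t ht ↦ (hf t ht).continuousAt.continuousWithinAt)
      (fun t ht ↦ (hf t (interior_subset ht)).differentiableAt.differentiableWithinAt) ?_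
    rw [hS.interior_eq]
    intro s hs t ht hst
    rw [(hf s hs).deriv, (hf t ht).deriv]
    exact hf' hs ht hst
  refine hconv.isMinOn_of_rightDeriv_eq_zero (hS.interior_eq.symm ▸ hx) ?_
  rw [(hf x hx).hasDerivWithinAt.derivWithin (uniqueDiffWithinAt_Ioi x), hzero]

section
variable {b D T t : ℝ}

theorem hasDerivAt_rpow_sub_div (hb : 0 < b) (hD : D ≠ 0) (ht : t ≠ 0) :
    HasDerivAt (fun s ↦ b ^ ((T - s) / (D * s)))
      (b ^ ((T - t) / (D * t)) * log b * (-T / (D * t ^ 2))) t := by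
  have hexp : HasDerivAt (fun s ↦ (T - s) / (D * s)) (-T / (D * t ^ 2)) t := by
    refine (((hasDerivAt_id t).const_sub T).div ((hasDerivAt_id t).const_mul D)
      (mul_ne_zero hD ht)).congr_deriv ?_
    simp only [id]
    field_simp
    ring
  exact (hasStrictDerivAt_const_rpow hb _).hasDerivAt.comp t hexp

theorem hasDerivAt_mul_rpow_sub_div_sub_one (hb : 0 < b) (hD : D ≠ 0) (ht : t ≠ 0) :
    HasDerivAt (fun s ↦ s * (b ^ ((T - s) / (D * s)) - 1))
      ((1 - T * log b / (D * t)) * b ^ ((T - t) / (D * t)) - 1) t := by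
  refine ((hasDerivAt_id t).mul ((hasDerivAt_rpow_sub_div hb hD ht).sub_const 1)).congr_deriv ?_
  simp only [id]
  field_simp
  ring

theorem hasDerivAt_one_sub_div_mul_rpow_sub_div (hb : 0 < b) (hD : D ≠ 0) (ht : t ≠ 0) :
    HasDerivAt (fun s ↦ (1 - T * log b / (D * s)) * b ^ ((T - s) / (D * s)))
      (b ^ ((T - t) / (D * t)) * (T * log b) ^ 2 / (D ^ 2 * t ^ 3)) t := by
  have hfac : HasDerivAt (fun s ↦ 1 - T * log b / (D * s)) (T * log b / (D * t ^ 2)) t := by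
    refine (((hasDerivAt_const t (T * log b)).div ((hasDerivAt_id t).const_mul D)
      (mul_ne_zero hD ht)).const_sub 1).congr_deriv ?_
    simp only [id]
    field_simp
    ring
  refine (hfac.mul (hasDerivAt_rpow_sub_div hb hD ht)).congr_deriv ?_
  field_simp
  ring

theorem monotoneOn_one_sub_div_mul_rpow_sub_div (hb : 0 < b) (hD : D ≠ 0) :
    MonotoneOn (fun s ↦ (1 - T * log b / (D * s)) * b ^ ((T - s) / (D * s))) (Ioi 0) := by
  have hderiv := fun t (ht : t ∈ Ioi (0 : ℝ)) ↦
    hasDerivAt_one_sub_div_mul_rpow_sub_div (T := T) hb hD (ne_of_gt ht)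
  refine monotoneOn_of_deriv_nonneg (convex_Ioi 0)
    (fun t ht ↦ (hderiv t ht).continuousAt.continuousWithinAt)
    (fun t ht ↦ (hderiv t (interior_subset ht)).differentiableAt.differentiableWithinAt)
    fun t ht ↦ ?_
  rw [interior_Ioi] at ht
  have : 0 < t := ht
  rw [(hderiv t ht).deriv]
  positivity

end

noncomputable def partialLagrangian (a c lam α β η g R T N₀ B t : ℝ) : ℝ :=
  (lam + c) * (α * (T - t) / (η * β * g)
    + (t / (η * g ^ 2)) * (N₀ * ((2 : ℝ) ^ ((T - t) / (B * R * β * t)) - 1)))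
  - a * log (1 + (T - t) / β)

noncomputable def partialLagrangianDeriv (a c lam α β η g R T N₀ B t : ℝ) : ℝ :=
  ((lam + c) * N₀ / (η * g ^ 2))
    * ((1 - T * log 2 / (B * R * β * t)) * (2 : ℝ) ^ ((T - t) / (B * R * β * t)) - 1)
  + a / (β + (T - t)) - (lam + c) * α / (η * g * β)

section
variable {a c lam α β η g R T N₀ B t : ℝ}

theorem hasDerivAt_partialLagrangian (hβ : β ≠ 0) (hD : B * R * β ≠ 0) (ht : t ≠ 0)
    (hβt : β + (T - t) ≠ 0) :
    HasDerivAt (partialLagrangian a c lam α β η g R T N₀ B)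
      (partialLagrangianDeriv a c lam α β η g R T N₀ B t) t := by
  have hlin : HasDerivAt (fun s ↦ α * (T - s) / (η * β * g)) (-(α / (η * β * g))) t := by
    refine (((hasDerivAt_id t).const_sub T).const_mul α |>.div_const _).congr_deriv ?_
    ring
  have hrate := (hasDerivAt_mul_rpow_sub_div_sub_one (T := T) two_pos hD ht).const_mul
    (N₀ / (η * g ^ 2))
  have hlog : HasDerivAt (fun s ↦ log (1 + (T - s) / β)) (-1 / (β + (T - t))) t := by
    have hpos : 1 + (T - t) / β ≠ 0 := by
      rwa [one_add_div hβ, div_ne_zero_iff, and_iff_left hβ]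
    refine ((((hasDerivAt_id t).const_sub T).div_const β).const_add 1 |>.log hpos).congr_deriv ?_
    simp only [id]
    field_simp
  have hL := ((hlin.add hrate).const_mul (lam + c)).sub (hlog.const_mul a)
  have hfun : partialLagrangian a c lam α β η g R T N₀ B = fun s ↦
      (lam + c) * (α * (T - s) / (η * β * g)
        + N₀ / (η * g ^ 2) * (s * ((2 : ℝ) ^ ((T - s) / (B * R * β * s)) - 1)))
      - a * log (1 + (T - s) / β) := by
    funext s
    unfold partialLagrangian
    ring
  rw [hfun]
  refine hL.congr_deriv ?_
  unfold partialLagrangianDeriv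
  ring

theorem monotoneOn_partialLagrangianDeriv (ha : 0 ≤ a) (hlc : 0 ≤ lam + c) (hη : 0 ≤ η)
    (hN₀ : 0 ≤ N₀) (hD : B * R * β ≠ 0) (hβ : 0 < β) :
    MonotoneOn (partialLagrangianDeriv a c lam α β η g R T N₀ B) (Ioo 0 T) := by
  intro s hs t ht hst
  have hrate := monotoneOn_one_sub_div_mul_rpow_sub_div (T := T) two_pos hD hs.1 ht.1 hst
  have : 0 < β + (T - t) := by linarith [ht.2]
  unfold partialLagrangianDeriv
  gcongr _ * (?_ - 1) + a / ?_ - _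
  linarith

end

theorem optimal_transmission_duration_iff_stationary_general
    (a c lam α β η g R T N₀ B : ℝ)
    (ha : 0 < a) (hc : 0 < c) (hlam : 0 ≤ lam) (hβ : 0 < β)
    (hη : 0 < η) (hR : 1 ≤ R) (hN₀ : 0 < N₀)
    (hB : 0 < B)
    (tstar : ℝ) (htstar : tstar ∈ Set.Ioo (0 : ℝ) T) :
    IsMinOn
      (fun t : ℝ =>
        (lam + c) * (α * (T - t) / (η * β * g)
          + (t / (η * g ^ 2)) * (N₀ * ((2 : ℝ) ^ ((T - t) / (B * R * β * t)) - 1)))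
        - a * Real.log (1 + (T - t) / β))
      (Set.Ioo 0 T) tstar
    ↔ ((lam + c) * N₀ / (η * g ^ 2))
        * ((1 - T * Real.log 2 / (B * R * β * tstar))
            * (2 : ℝ) ^ ((T - tstar) / (B * R * β * tstar)) - 1)
      + a / (β + (T - tstar)) - (lam + c) * α / (η * g * β) = 0 := by
  have hD : B * R * β ≠ 0 := by positivity
  refine isMinOn_iff_eq_zero_of_hasDerivAt_of_monotoneOn isOpen_Ioo (convex_Ioo 0 T)
    (fun t ht ↦ hasDerivAt_partialLagrangian hβ.ne' hD ht.1.ne' (by linarith [ht.2]))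
    (monotoneOn_partialLagrangianDeriv ha.le (by positivity) hη.le hN₀.le hD hβ) htstar

/-- Proposition 1: a point t* ∈ (0, T) minimizes the
single-sensor partial Lagrangian
L(t) = (λ+c)·[α(T−t)/(ηβg) + (t/(ηg²))·N₀·(2^{(T−t)/(BRβt)} − 1)]
        − a·log(1 + (T−t)/β)
over (0, T) if and only if it satisfies the stationarity equation (14). -/
theorem optimal_transmission_duration_iff_stationary
    (a c lam α β η g R T N₀ B : ℝ)
    (ha : 0 < a) (hc : 0 < c) (hlam : 0 ≤ lam) (hα : 0 < α) (hβ : 0 < β)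
    (hη : 0 < η) (hg : 0 < g) (hR : 1 ≤ R) (hT : 0 < T) (hN₀ : 0 < N₀)
    (hB : 0 < B)
    (tstar : ℝ) (htstar : tstar ∈ Set.Ioo (0 : ℝ) T) :
    IsMinOn
      (fun t : ℝ =>
        (lam + c) * (α * (T - t) / (η * β * g)
          + (t / (η * g ^ 2)) * (N₀ * ((2 : ℝ) ^ ((T - t) / (B * R * β * t)) - 1)))
        - a * Real.log (1 + (T - t) / β))
      (Set.Ioo 0 T) tstar
    ↔ ((lam + c) * N₀ / (η * g ^ 2))
        * ((1 - T * Real.log 2 / (B * R * β * tstar))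
            * (2 : ℝ) ^ ((T - tstar) / (B * R * β * tstar)) - 1)
      + a / (β + (T - tstar)) - (lam + c) * α / (η * g * β) = 0 :=
  optimal_transmission_duration_iff_stationary_general a c lam α β η g R T N₀ B ha hc hlam hβ hη hR
    hN₀ hB tstar htstar
end

section
/- Fix constants c > 0, λ ≥ 0, α > 0, β > 0, η > 0, g > 0, R ≥ 1, T > 0, N₀ > 0, B > 0, and let a₁ ≥ a₂ > 0. If t₁, t₂ ∈ (0, T) satisfy the stationarity equation ((λ+c)·N₀/(η g²))·[(1 − T ln 2/(B R β t_i))·2^{(T−t_i)/(B R β t_i)} − 1] + a_i/(β + T − t_i) − (λ+c)·α/(η g β) = 0 for i = 1, 2 respectively, then t₁ ≤ t₂. (Corollary 1, part 1: with identical channel gains, a sensor with larger utility weight has a shorter optimal transmission duration.) -/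
/-!
Write `k = B R β` and `s = T / (k t)`. The rate term of (14) equals `2^(-1/k) (1 - s ln 2) 2^s`;
since `d/ds [(1 - s ln 2) 2^s] = -s (ln 2)² 2^s ≤ 0` and `s` decreases in `t`, this term is
nondecreasing in `t`. The utility term `a / (β + T - t)` is strictly increasing in `t` and
nondecreasing in `a`. Hence `t₂ < t₁` would give `0 = F(a₂, t₂) < F(a₂, t₁) ≤ F(a₁, t₁) = 0`,
where `F(a, t)` is the left-hand side of (14).
-/

open Real Set

lemma hasDerivAt_one_sub_mul_log_mul_rpow {b : ℝ} (hb : 0 < b) (s : ℝ) :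
    HasDerivAt (fun s => (1 - s * log b) * b ^ s) (-(s * log b ^ 2 * b ^ s)) s := by
  refine ((((hasDerivAt_id' s).mul_const (log b)).const_sub 1).fun_mul
    (hasStrictDerivAt_const_rpow hb s).hasDerivAt).congr_deriv ?_
  ring

lemma antitoneOn_one_sub_mul_log_mul_rpow {b : ℝ} (hb : 0 < b) :
    AntitoneOn (fun s => (1 - s * log b) * b ^ s) (Ici 0) := by
  have hderiv := hasDerivAt_one_sub_mul_log_mul_rpow hb
  refine antitoneOn_of_deriv_nonpos (convex_Ici 0) (HasDerivAt.continuousOn fun s _ => hderiv s)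
    (fun s _ => (hderiv s).differentiableAt.differentiableWithinAt) fun s hs => ?_
  rw [interior_Ici, mem_Ioi] at hs
  rw [(hderiv s).deriv, neg_nonpos]
  exact mul_nonneg (mul_nonneg hs.le (sq_nonneg _)) (rpow_nonneg hb.le s)

lemma monotoneOn_one_sub_div_mul_rpow {k T : ℝ} (hk : 0 < k) (hT : 0 ≤ T) :
    MonotoneOn (fun t => (1 - T * log 2 / (k * t)) * (2 : ℝ) ^ ((T - t) / (k * t))) (Ioi 0) := by
  have hform : ∀ t ∈ Ioi (0 : ℝ), (1 - T * log 2 / (k * t)) * (2 : ℝ) ^ ((T - t) / (k * t))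
      = (1 - T / (k * t) * log 2) * 2 ^ (T / (k * t)) / 2 ^ (1 / k) := by
    intro t (ht : 0 < t)
    have hdiv : t / (k * t) = 1 / k := by field_simp [ht.ne']
    rw [sub_div, hdiv, rpow_sub two_pos]
    ring
  intro t₁ ht₁ t₂ ht₂ h
  simp only [hform t₁ ht₁, hform t₂ ht₂]
  have hs : T / (k * t₂) ≤ T / (k * t₁) :=
    div_le_div_of_nonneg_left hT (mul_pos hk ht₁) (mul_le_mul_of_nonneg_left h hk.le)
  refine div_le_div_of_nonneg_right ?_ (rpow_nonneg zero_le_two _)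
  exact antitoneOn_one_sub_mul_log_mul_rpow two_pos (div_nonneg hT (mul_pos hk ht₂).le)
    (div_nonneg hT (mul_pos hk ht₁).le) hs

theorem larger_utility_weight_shorter_transmission_general
    (c lam α β η g R T N₀ B a₁ a₂ : ℝ)
    (hc : 0 < c) (hlam : 0 ≤ lam) (hβ : 0 < β)
    (hη : 0 < η) (hR : 1 ≤ R) (hN₀ : 0 < N₀)
    (hB : 0 < B) (ha₂ : 0 < a₂) (ha : a₂ ≤ a₁)
    (t₁ t₂ : ℝ) (ht₁ : t₁ ∈ Set.Ioo (0 : ℝ) T) (ht₂ : t₂ ∈ Set.Ioo (0 : ℝ) T)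
    (hstat₁ : ((lam + c) * N₀ / (η * g ^ 2))
        * ((1 - T * Real.log 2 / (B * R * β * t₁))
            * (2 : ℝ) ^ ((T - t₁) / (B * R * β * t₁)) - 1)
      + a₁ / (β + (T - t₁)) - (lam + c) * α / (η * g * β) = 0)
    (hstat₂ : ((lam + c) * N₀ / (η * g ^ 2))
        * ((1 - T * Real.log 2 / (B * R * β * t₂))
            * (2 : ℝ) ^ ((T - t₂) / (B * R * β * t₂)) - 1)
      + a₂ / (β + (T - t₂)) - (lam + c) * α / (η * g * β) = 0) :
    t₁ ≤ t₂ := by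
  obtain ⟨ht₁0, ht₁T⟩ := ht₁
  obtain ⟨ht₂0, ht₂T⟩ := ht₂
  by_contra! hlt
  have hcoeff : 0 ≤ (lam + c) * N₀ / (η * g ^ 2) := by positivity
  have hk : 0 < B * R * β := mul_pos (mul_pos hB (by linarith)) hβ
  have hrate := mul_le_mul_of_nonneg_left
    (monotoneOn_one_sub_div_mul_rpow (T := T) hk (by linarith) ht₂0 ht₁0 hlt.le) hcoeff
  have hutility : a₂ / (β + (T - t₂)) < a₂ / (β + (T - t₁)) :=
    div_lt_div_of_pos_left ha₂ (by linarith) (by linarith)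
  have hweight : a₂ / (β + (T - t₁)) ≤ a₁ / (β + (T - t₁)) := by gcongr
  linarith

/-- Corollary 1, part 1: with identical channel gains, a sensor
with larger utility weight has a shorter optimal transmission duration. If
t₁, t₂ ∈ (0, T) satisfy the stationarity equation (14) with utility weights
a₁ ≥ a₂ respectively, then t₁ ≤ t₂. -/
theorem larger_utility_weight_shorter_transmission
    (c lam α β η g R T N₀ B a₁ a₂ : ℝ)
    (hc : 0 < c) (hlam : 0 ≤ lam) (hα : 0 < α) (hβ : 0 < β)
    (hη : 0 < η) (hg : 0 < g) (hR : 1 ≤ R) (hT : 0 < T) (hN₀ : 0 < N₀)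
    (hB : 0 < B) (ha₂ : 0 < a₂) (ha : a₂ ≤ a₁)
    (t₁ t₂ : ℝ) (ht₁ : t₁ ∈ Set.Ioo (0 : ℝ) T) (ht₂ : t₂ ∈ Set.Ioo (0 : ℝ) T)
    (hstat₁ : ((lam + c) * N₀ / (η * g ^ 2))
        * ((1 - T * Real.log 2 / (B * R * β * t₁))
            * (2 : ℝ) ^ ((T - t₁) / (B * R * β * t₁)) - 1)
      + a₁ / (β + (T - t₁)) - (lam + c) * α / (η * g * β) = 0)
    (hstat₂ : ((lam + c) * N₀ / (η * g ^ 2))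
        * ((1 - T * Real.log 2 / (B * R * β * t₂))
            * (2 : ℝ) ^ ((T - t₂) / (B * R * β * t₂)) - 1)
      + a₂ / (β + (T - t₂)) - (lam + c) * α / (η * g * β) = 0) :
    t₁ ≤ t₂ :=
  larger_utility_weight_shorter_transmission_general c lam α β η g R T N₀ B a₁ a₂ hc hlam hβ hη hR
    hN₀ hB ha₂ ha t₁ t₂ ht₁ ht₂ hstat₁ hstat₂
end

section
/- Fix constants a > 0, c > 0, λ ≥ 0, α > 0, β > 0, η > 0, R ≥ 1, T > 0, N₀ > 0, B > 0, and let g₁ ≥ g₂ > 0. If t₁, t₂ ∈ (0, T) satisfy the stationarity equation ((λ+c)·N₀/(η g_i²))·[(1 − T ln 2/(B R β t_i))·2^{(T−t_i)/(B R β t_i)} − 1] + a/(β + T − t_i) − (λ+c)·α/(η g_i β) = 0 for i = 1, 2 respectively, then t₁ ≤ t₂. (Corollary 1, part 2: with identical utility weights, a sensor with a larger effective channel power gain has a shorter optimal transmission duration.) -/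
/-! Write `F(g, t)` for the left-hand side of (14). With `x = (T - t) / (B R β t)`, the bracketed
rate factor equals `(1 - log 2 · (x + 1 / (B R β))) · 2 ^ x`, whose derivative in `x` is
`-(log 2)² (x + 1 / (B R β)) 2 ^ x < 0`; as `x` decreases in `t`, `F(g, ·)` is strictly increasing
on `(0, T)`. The rate factor is at most its value `1 - log 2 / (B R β)` at `x = 0`, so the
bracket is negative and `F(·, t)` is nondecreasing in `g`. Hence
`F(g₂, t₁) ≤ F(g₁, t₁) = 0 = F(g₂, t₂)`, which forces `t₁ ≤ t₂`. -/

open Real Set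

lemma hasDerivAt_one_sub_log_mul_mul_rpow {b : ℝ} (hb : 0 < b) (c x : ℝ) :
    HasDerivAt (fun x => (1 - log b * (x + c)) * b ^ x)
      (-(log b * (log b * (x + c)) * b ^ x)) x := by
  have hlin : HasDerivAt (fun x => 1 - log b * (x + c)) (-(log b * 1)) x :=
    (((hasDerivAt_id x).add_const c).const_mul (log b)).const_sub 1
  refine (hlin.mul ((hasDerivAt_id x).const_rpow hb)).congr_deriv ?_
  simp only [id]
  ring

lemma strictAntiOn_one_sub_log_mul_mul_rpow {b c : ℝ} (hb : 1 < b) (hc : 0 ≤ c) :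
    StrictAntiOn (fun x => (1 - log b * (x + c)) * b ^ x) (Ici 0) := by
  have hb₀ : 0 < b := zero_lt_one.trans hb
  have hlog : 0 < log b := log_pos hb
  refine strictAntiOn_of_hasDerivWithinAt_neg (convex_Ici 0)
    (fun x _ => (hasDerivAt_one_sub_log_mul_mul_rpow hb₀ c x).continuousAt.continuousWithinAt)
    (fun x _ => (hasDerivAt_one_sub_log_mul_mul_rpow hb₀ c x).hasDerivWithinAt) ?_
  intro x hx
  rw [interior_Ici, mem_Ioi] at hx
  have : 0 < log b * (log b * (x + c)) * b ^ x := by positivity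
  linarith

noncomputable def rateFactor (C T t : ℝ) : ℝ :=
  (1 - T * log 2 / (C * t)) * 2 ^ ((T - t) / (C * t))

lemma rateFactor_eq {C T t : ℝ} (hC : C ≠ 0) (ht : t ≠ 0) :
    rateFactor C T t = (1 - log 2 * ((T - t) / (C * t) + 1 / C)) * 2 ^ ((T - t) / (C * t)) := by
  unfold rateFactor
  congr 2
  field_simp
  ring

lemma strictAntiOn_sub_div_mul {C T : ℝ} (hC : 0 < C) :
    StrictAntiOn (fun t => (T - t) / (C * t)) (Ioo 0 T) := by
  intro s ⟨hs, _⟩ t ⟨ht, htT⟩ hst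
  simp only
  rw [div_lt_div_iff₀ (by positivity) (by positivity)]
  nlinarith [mul_pos hC (sub_pos.2 hst), mul_pos hs ht]

lemma mapsTo_sub_div_mul {C T : ℝ} (hC : 0 < C) :
    MapsTo (fun t => (T - t) / (C * t)) (Ioo 0 T) (Ici 0) :=
  fun t ⟨ht, htT⟩ => div_nonneg (sub_nonneg.2 htT.le) (by positivity)

lemma strictMonoOn_rateFactor {C T : ℝ} (hC : 0 < C) : StrictMonoOn (rateFactor C T) (Ioo 0 T) := by
  have hcomp := (strictAntiOn_one_sub_log_mul_mul_rpow one_lt_two (one_div_pos.2 hC).le).comp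
    (strictAntiOn_sub_div_mul (T := T) hC) (mapsTo_sub_div_mul hC)
  intro s hs t ht hst
  rw [rateFactor_eq hC.ne' hs.1.ne', rateFactor_eq hC.ne' ht.1.ne']
  exact hcomp hs ht hst

lemma rateFactor_le_one {C T t : ℝ} (hC : 0 < C) (ht : t ∈ Ioo 0 T) : rateFactor C T t ≤ 1 := by
  have hanti := strictAntiOn_one_sub_log_mul_mul_rpow one_lt_two (one_div_pos.2 hC).le
  rw [rateFactor_eq hC.ne' ht.1.ne']
  calc _ ≤ (1 - log 2 * (0 + 1 / C)) * (2 : ℝ) ^ (0 : ℝ) :=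
        hanti.antitoneOn self_mem_Ici (mapsTo_sub_div_mul hC ht) (mapsTo_sub_div_mul hC ht)
    _ ≤ 1 := by
        have : 0 < log 2 * (0 + 1 / C) := by have := log_pos one_lt_two; positivity
        simp only [rpow_zero, mul_one]
        linarith

noncomputable def stationarityLhs (a c lam α β η R T N₀ B g t : ℝ) : ℝ :=
  (lam + c) * N₀ / (η * g ^ 2) * (rateFactor (B * R * β) T t - 1)
    + a / (β + (T - t)) - (lam + c) * α / (η * g * β)

section

variable {a c lam α β η R T N₀ B : ℝ}

lemma strictMonoOn_stationarityLhs {g : ℝ} (ha : 0 ≤ a) (hlc : 0 < lam + c) (hβ : 0 ≤ β)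
    (hη : 0 < η) (hN₀ : 0 < N₀) (hC : 0 < B * R * β) (hg : g ≠ 0) :
    StrictMonoOn (stationarityLhs a c lam α β η R T N₀ B g) (Ioo 0 T) := by
  intro s hs t ht hst
  have hrate := strictMonoOn_rateFactor hC hs ht hst
  have hK : 0 < (lam + c) * N₀ / (η * g ^ 2) := by positivity
  have hutil : a / (β + (T - s)) ≤ a / (β + (T - t)) :=
    div_le_div_of_nonneg_left ha (by linarith [ht.2]) (by linarith)
  unfold stationarityLhs
  linarith [mul_lt_mul_of_pos_left hrate hK]

lemma stationarityLhs_le_of_gain_le {g₁ g₂ t : ℝ} (hlc : 0 ≤ lam + c) (hα : 0 ≤ α) (hβ : 0 < β)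
    (hη : 0 < η) (hN₀ : 0 ≤ N₀) (hC : 0 < B * R * β) (hg₂ : 0 < g₂) (hg : g₂ ≤ g₁)
    (ht : t ∈ Ioo 0 T) :
    stationarityLhs a c lam α β η R T N₀ B g₂ t ≤ stationarityLhs a c lam α β η R T N₀ B g₁ t := by
  have hK : (lam + c) * N₀ / (η * g₁ ^ 2) ≤ (lam + c) * N₀ / (η * g₂ ^ 2) := by
    gcongr
  have hcost : (lam + c) * α / (η * g₁ * β) ≤ (lam + c) * α / (η * g₂ * β) := by
    gcongr
  have hrate : rateFactor (B * R * β) T t - 1 ≤ 0 := by linarith [rateFactor_le_one hC ht]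
  unfold stationarityLhs
  linarith [mul_le_mul_of_nonpos_right hK hrate]

end

theorem larger_channel_gain_shorter_transmission_general
    (a c lam α β η R T N₀ B g₁ g₂ : ℝ)
    (ha : 0 < a) (hc : 0 < c) (hlam : 0 ≤ lam) (hα : 0 < α) (hβ : 0 < β)
    (hη : 0 < η) (hR : 1 ≤ R) (hN₀ : 0 < N₀) (hB : 0 < B)
    (hg₂ : 0 < g₂) (hg : g₂ ≤ g₁)
    (t₁ t₂ : ℝ) (ht₁ : t₁ ∈ Set.Ioo (0 : ℝ) T) (ht₂ : t₂ ∈ Set.Ioo (0 : ℝ) T)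
    (hstat₁ : ((lam + c) * N₀ / (η * g₁ ^ 2))
        * ((1 - T * Real.log 2 / (B * R * β * t₁))
            * (2 : ℝ) ^ ((T - t₁) / (B * R * β * t₁)) - 1)
      + a / (β + (T - t₁)) - (lam + c) * α / (η * g₁ * β) = 0)
    (hstat₂ : ((lam + c) * N₀ / (η * g₂ ^ 2))
        * ((1 - T * Real.log 2 / (B * R * β * t₂))
            * (2 : ℝ) ^ ((T - t₂) / (B * R * β * t₂)) - 1)
      + a / (β + (T - t₂)) - (lam + c) * α / (η * g₂ * β) = 0) :
    t₁ ≤ t₂ := by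
  have hlc : 0 < lam + c := by linarith
  have hC : 0 < B * R * β := by have := zero_lt_one.trans_le hR; positivity
  have hcross : stationarityLhs a c lam α β η R T N₀ B g₂ t₁
      ≤ stationarityLhs a c lam α β η R T N₀ B g₂ t₂ :=
    calc _ ≤ stationarityLhs a c lam α β η R T N₀ B g₁ t₁ :=
          stationarityLhs_le_of_gain_le hlc.le hα.le hβ hη hN₀.le hC hg₂ hg ht₁
      _ = stationarityLhs a c lam α β η R T N₀ B g₂ t₂ := hstat₁.trans hstat₂.symm
  exact ((strictMonoOn_stationarityLhs ha.le hlc hβ.le hη hN₀ hC hg₂.ne').le_iff_le ht₁ ht₂).1 hcross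

/-- Corollary 1, part 2: with identical utility weights, a sensor
with larger effective channel power gain has a shorter optimal transmission
duration. If t₁, t₂ ∈ (0, T) satisfy the stationarity equation (14) with
channel gains g₁ ≥ g₂ respectively, then t₁ ≤ t₂. -/
theorem larger_channel_gain_shorter_transmission
    (a c lam α β η R T N₀ B g₁ g₂ : ℝ)
    (ha : 0 < a) (hc : 0 < c) (hlam : 0 ≤ lam) (hα : 0 < α) (hβ : 0 < β)
    (hη : 0 < η) (hR : 1 ≤ R) (hT : 0 < T) (hN₀ : 0 < N₀) (hB : 0 < B)
    (hg₂ : 0 < g₂) (hg : g₂ ≤ g₁)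
    (t₁ t₂ : ℝ) (ht₁ : t₁ ∈ Set.Ioo (0 : ℝ) T) (ht₂ : t₂ ∈ Set.Ioo (0 : ℝ) T)
    (hstat₁ : ((lam + c) * N₀ / (η * g₁ ^ 2))
        * ((1 - T * Real.log 2 / (B * R * β * t₁))
            * (2 : ℝ) ^ ((T - t₁) / (B * R * β * t₁)) - 1)
      + a / (β + (T - t₁)) - (lam + c) * α / (η * g₁ * β) = 0)
    (hstat₂ : ((lam + c) * N₀ / (η * g₂ ^ 2))
        * ((1 - T * Real.log 2 / (B * R * β * t₂))
            * (2 : ℝ) ^ ((T - t₂) / (B * R * β * t₂)) - 1)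
      + a / (β + (T - t₂)) - (lam + c) * α / (η * g₂ * β) = 0) :
    t₁ ≤ t₂ :=
  larger_channel_gain_shorter_transmission_general a c lam α β η R T N₀ B g₁ g₂ ha hc hlam hα hβ hη
    hR hN₀ hB hg₂ hg t₁ t₂ ht₁ ht₂ hstat₁ hstat₂
end

section
/- For constants α > 0, β > 0, η > 0, g > 0, R ≥ 1, T > 0, T₀ > 0, N₀ > 0, B > 0, the function P(t) = (1/(η g T₀))·[(t/g)·N₀·(2^{(T−t)/(B R β t)} − 1) + α(T−t)/β] is strictly decreasing on (0, T], and P(T) = 0; consequently P(t) > 0 for all t ∈ (0, T). (Key step in the proof of Proposition 2: the wireless power required by a sensor is a strictly decreasing function of its transmission duration, vanishing exactly at t = T.) -/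
/-!
The transmission energy is `t (2^((T - t)/(c t)) - 1) = t φ(T / t)` with `c = B R β` and
`φ x = 2^((x - 1)/c) - 1`, which is convex with `φ 0 ≤ 0`. For such `φ` the perspective
`t ↦ t φ(T / t)` is antitone on `t > 0`: for `s ≤ t`, `T / t` is the convex combination
`(s/t)(T/s) + (1 - s/t) 0`. Adding the strictly decreasing sensing energy `α (T - t) / β` makes
`P` strictly decreasing, and `P T = 0` then gives `P t > 0` for `t < T`.
-/

open Real Set

theorem ConvexOn.antitoneOn_mul_comp_div {φ : ℝ → ℝ} (hφ : ConvexOn ℝ univ φ) (hφ0 : φ 0 ≤ 0)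
    (T : ℝ) : AntitoneOn (fun t => t * φ (T / t)) (Ioi 0) := by
  intro s (hs : 0 < s) t (ht : 0 < t) hst
  have hconv := hφ.2 (mem_univ (T / s)) (mem_univ 0) (div_nonneg hs.le ht.le)
    (sub_nonneg.2 ((div_le_one ht).2 hst)) (add_sub_cancel _ 1)
  have hcomb : (s / t) • (T / s) + (1 - s / t) • (0 : ℝ) = T / t := by
    simp only [smul_eq_mul, mul_zero, add_zero]; field_simp
  rw [hcomb, smul_eq_mul, smul_eq_mul] at hconv
  calc t * φ (T / t) ≤ t * (s / t * φ (T / s) + (1 - s / t) * φ 0) := by gcongr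
    _ = s * φ (T / s) + (t - s) * φ 0 := by field_simp
    _ ≤ s * φ (T / s) := by nlinarith

theorem convexOn_two_rpow_sub_one_div (c : ℝ) :
    ConvexOn ℝ univ (fun x : ℝ => (2 : ℝ) ^ ((x - 1) / c) - 1) := by
  have hcomp : (fun x : ℝ => (2 : ℝ) ^ ((x - 1) / c) - 1)
      = (fun y : ℝ => (2 : ℝ) ^ y) ∘ AffineMap.lineMap (-c⁻¹) 0 + fun _ => -1 := by
    funext x
    simp only [Pi.add_apply, Function.comp_apply, AffineMap.lineMap_apply_ring']
    ring_nf
  rw [hcomp, ← preimage_univ (f := AffineMap.lineMap (k := ℝ) (-c⁻¹) (0 : ℝ))]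
  exact ((convexOn_rpow_left two_pos).comp_affineMap _).add_const _

theorem antitoneOn_mul_two_rpow_sub_one {c : ℝ} (hc : 0 ≤ c) (T : ℝ) :
    AntitoneOn (fun t : ℝ => t * ((2 : ℝ) ^ ((T - t) / (c * t)) - 1)) (Ioi 0) := by
  have hφ0 : (2 : ℝ) ^ ((0 - 1) / c) - 1 ≤ 0 := by
    rw [sub_nonpos]
    exact rpow_le_one_of_one_le_of_nonpos one_le_two
      (div_nonpos_of_nonpos_of_nonneg (by norm_num) hc)
  refine ((convexOn_two_rpow_sub_one_div c).antitoneOn_mul_comp_div hφ0 T).congr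
    fun t (ht : 0 < t) => ?_
  dsimp only
  congr 3
  field_simp

/-- The paper's `P(t)`. -/
noncomputable def requiredPower (α β η g R T T₀ N₀ B t : ℝ) : ℝ :=
  (1 / (η * g * T₀)) * ((t / g) * (N₀ * ((2 : ℝ) ^ ((T - t) / (B * R * β * t)) - 1))
    + α * (T - t) / β)

theorem requiredPower_self (α β η g R T T₀ N₀ B : ℝ) :
    requiredPower α β η g R T T₀ N₀ B T = 0 := by
  simp [requiredPower]

theorem strictAntiOn_requiredPower {α β η g R T₀ N₀ B : ℝ} (hα : 0 < α) (hβ : 0 < β)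
    (hη : 0 < η) (hg : 0 < g) (hR : 1 ≤ R) (hT₀ : 0 < T₀) (hN₀ : 0 < N₀) (hB : 0 < B) (T : ℝ) :
    StrictAntiOn (requiredPower α β η g R T T₀ N₀ B) (Ioi 0) := by
  intro s (hs : 0 < s) t (ht : 0 < t) hst
  have hrate := antitoneOn_mul_two_rpow_sub_one (c := B * R * β) (by positivity) T hs ht hst.le
  dsimp only at hrate
  have htransmit : t / g * (N₀ * ((2 : ℝ) ^ ((T - t) / (B * R * β * t)) - 1)) ≤
      s / g * (N₀ * ((2 : ℝ) ^ ((T - s) / (B * R * β * s)) - 1)) := by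
    calc _ = N₀ / g * (t * ((2 : ℝ) ^ ((T - t) / (B * R * β * t)) - 1)) := by ring
      _ ≤ N₀ / g * (s * ((2 : ℝ) ^ ((T - s) / (B * R * β * s)) - 1)) := by gcongr
      _ = _ := by ring
  have hsense : α * (T - t) / β < α * (T - s) / β := by gcongr
  unfold requiredPower
  gcongr ?_ * ?_
  exact add_lt_add_of_le_of_lt htransmit hsense

theorem required_power_strictly_decreasing_general
    (α β η g R T T₀ N₀ B : ℝ)
    (hα : 0 < α) (hβ : 0 < β) (hη : 0 < η) (hg : 0 < g) (hR : 1 ≤ R)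
    (hT₀ : 0 < T₀) (hN₀ : 0 < N₀) (hB : 0 < B) :
    StrictAntiOn
      (fun t : ℝ => (1 / (η * g * T₀))
        * ((t / g) * (N₀ * ((2 : ℝ) ^ ((T - t) / (B * R * β * t)) - 1))
          + α * (T - t) / β))
      (Set.Ioc 0 T) ∧
    (1 / (η * g * T₀))
        * ((T / g) * (N₀ * ((2 : ℝ) ^ ((T - T) / (B * R * β * T)) - 1))
          + α * (T - T) / β) = 0 ∧
    ∀ t ∈ Set.Ioo (0 : ℝ) T,
      0 < (1 / (η * g * T₀))
        * ((t / g) * (N₀ * ((2 : ℝ) ^ ((T - t) / (B * R * β * t)) - 1))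
          + α * (T - t) / β) := by
  have hanti : StrictAntiOn (requiredPower α β η g R T T₀ N₀ B) (Ioc 0 T) :=
    (strictAntiOn_requiredPower hα hβ hη hg hR hT₀ hN₀ hB T).mono Ioc_subset_Ioi_self
  refine ⟨hanti, requiredPower_self α β η g R T T₀ N₀ B, fun t ht => ?_⟩
  rw [← requiredPower_self α β η g R T T₀ N₀ B]
  exact hanti ⟨ht.1, ht.2.le⟩ ⟨ht.1.trans ht.2, le_rfl⟩ ht.2

/-- key step of Proposition 2: the wireless power
P(t) = (1/(ηgT₀))·[(t/g)·N₀·(2^{(T−t)/(BRβt)} − 1) + α(T−t)/β]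
required by a sensor is strictly decreasing in its transmission duration t on
(0, T], vanishes at t = T, and hence is positive on (0, T). -/
theorem required_power_strictly_decreasing
    (α β η g R T T₀ N₀ B : ℝ)
    (hα : 0 < α) (hβ : 0 < β) (hη : 0 < η) (hg : 0 < g) (hR : 1 ≤ R)
    (hT : 0 < T) (hT₀ : 0 < T₀) (hN₀ : 0 < N₀) (hB : 0 < B) :
    StrictAntiOn
      (fun t : ℝ => (1 / (η * g * T₀))
        * ((t / g) * (N₀ * ((2 : ℝ) ^ ((T - t) / (B * R * β * t)) - 1))
          + α * (T - t) / β))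
      (Set.Ioc 0 T) ∧
    (1 / (η * g * T₀))
        * ((T / g) * (N₀ * ((2 : ℝ) ^ ((T - T) / (B * R * β * T)) - 1))
          + α * (T - T) / β) = 0 ∧
    ∀ t ∈ Set.Ioo (0 : ℝ) T,
      0 < (1 / (η * g * T₀))
        * ((t / g) * (N₀ * ((2 : ℝ) ^ ((T - t) / (B * R * β * t)) - 1))
          + α * (T - t) / β) :=
  required_power_strictly_decreasing_general α β η g R T T₀ N₀ B hα hβ hη hg hR hT₀ hN₀ hB
end

section
/- Define L(t) = (λ+c)·[α(T−t)/(η β g) + (t/(η g²))·N₀·(2^{(T−t)/(B R β t)} − 1)] − a·log(1 + (T−t)/β) with constants a > 0, c > 0, λ ≥ 0, α > 0, β > 0, η > 0, g > 0, R ≥ 1, T > 0, N₀ > 0, B > 0. Then t = T is a minimizer of L over (0, T] if and only if λ + c ≥ κ, where κ = a η g / (α + N₀ ln 2/(g B R)). (Threshold structure of Proposition 2: the sensor receives zero wireless power, i.e. t* = T and ℓ* = 0, exactly when its crowd-sensing priority φ = κ − c falls below the multiplier λ.) -/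
/-!
`L(T) = 0`, and on `(0, T]` the function `L` lies above its tangent line at `T`: this follows
termwise from `2 ^ x ≥ 1 + x log 2` and `log (1 + v) ≤ v`. Hence `T` is a minimizer as soon as
`L'(T) = a/β - (λ + c) (α + N₀ log 2 / (g B R)) / (η β g) ≤ 0`, and conversely a minimum at the
right endpoint of `(0, T]` forces `L'(T) ≤ 0`. The sign of `L'(T)` is that of `κ - (λ + c)`.
-/

open Real Set

theorem IsMinOn.hasDerivAt_nonpos_of_Ioc {f : ℝ → ℝ} {f' a b : ℝ} (hab : a < b)
    (hmin : IsMinOn f (Ioc a b) b) (hf : HasDerivAt f f' b) : f' ≤ 0 := by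
  have hcone : a - b ∈ posTangentConeAt (Ioc a b) b :=
    sub_mem_posTangentConeAt_of_openSegment_subset
      ((openSegment_symm ℝ b a).trans (openSegment_eq_Ioo hab) ▸ Ioo_subset_Ioc_self)
  have h := hmin.localize.hasFDerivWithinAt_nonneg hf.hasFDerivAt.hasFDerivWithinAt hcone
  rw [ContinuousLinearMap.toSpanSingleton_apply, smul_eq_mul] at h
  nlinarith

theorem Real.one_add_mul_log_le_rpow {b : ℝ} (hb : 0 < b) (x : ℝ) : 1 + x * log b ≤ b ^ x := by
  rw [rpow_def_of_pos hb, mul_comm]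
  linarith [add_one_le_exp (log b * x)]

section SensorLagrangian

variable (a c lam α β η g R T N₀ B : ℝ)

noncomputable def sensorLagrangian (t : ℝ) : ℝ :=
  (lam + c) * (α * (T - t) / (η * β * g)
    + (t / (η * g ^ 2)) * (N₀ * ((2 : ℝ) ^ ((T - t) / (B * R * β * t)) - 1)))
  - a * log (1 + (T - t) / β)

theorem sensorLagrangian_self : sensorLagrangian a c lam α β η g R T N₀ B T = 0 := by
  simp [sensorLagrangian]

variable {a c lam α β η g R T N₀ B}

theorem hasDerivAt_sensorLagrangian_self (hβ : β ≠ 0) (hη : η ≠ 0) (hg : g ≠ 0)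
    (hBR : B * R ≠ 0) (hT : T ≠ 0) :
    HasDerivAt (sensorLagrangian a c lam α β η g R T N₀ B)
      (a / β - (lam + c) * (α + N₀ * log 2 / (g * B * R)) / (η * β * g)) T := by
  have hsub : HasDerivAt (fun t => T - t) (-1) T := by
    simpa using (hasDerivAt_id T).const_sub T
  have hexponent : HasDerivAt (fun t => (T - t) / (B * R * β * t)) (-1 / (B * R * β * T)) T := by
    have := hsub.fun_div ((hasDerivAt_id' T).const_mul (B * R * β)) (by simp [hβ, hT, hBR])
    refine this.congr_deriv ?_
    field_simp
    ring
  have hpow := hexponent.const_rpow (a := 2) two_pos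
  have hlog := ((hsub.div_const β).const_add 1).log (by simp)
  have := ((((hsub.const_mul α).div_const (η * β * g)).fun_add
    ((((hasDerivAt_id' T).div_const (η * g ^ 2)).fun_mul
      ((hpow.sub_const 1).const_mul N₀)))).const_mul (lam + c)).fun_sub (hlog.const_mul a)
  refine this.congr_deriv ?_
  simp only [sub_self, zero_div, rpow_zero, add_zero]
  field_simp
  ring

theorem sensorLagrangian_self_add_deriv_mul_le (ha : 0 ≤ a) (hlc : 0 ≤ lam + c) (hβ : 0 < β)
    (hη : 0 < η) (hg : 0 < g) (hN₀ : 0 ≤ N₀) {t : ℝ} (ht : t ∈ Ioc 0 T) :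
    sensorLagrangian a c lam α β η g R T N₀ B T
        + (a / β - (lam + c) * (α + N₀ * log 2 / (g * B * R)) / (η * β * g)) * (t - T)
      ≤ sensorLagrangian a c lam α β η g R T N₀ B t := by
  obtain ⟨ht0, htT⟩ := ht
  have hpow := one_add_mul_log_le_rpow two_pos ((T - t) / (B * R * β * t))
  have hlog := log_le_sub_one_of_pos (show 0 < 1 + (T - t) / β by
    linarith [div_nonneg (sub_nonneg.2 htT) hβ.le])
  have hlower : (lam + c) * (α * (T - t) / (η * β * g)
        + t / (η * g ^ 2) * (N₀ * ((T - t) / (B * R * β * t) * log 2)))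
        - a * ((T - t) / β) ≤ sensorLagrangian a c lam α β η g R T N₀ B t := by
    unfold sensorLagrangian
    gcongr <;> linarith
  rw [sensorLagrangian_self, zero_add]
  convert hlower using 1
  field_simp
  ring

end SensorLagrangian

/-- threshold structure of Proposition 2: t = T minimizes the
single-sensor partial Lagrangian
L(t) = (λ+c)·[α(T−t)/(ηβg) + (t/(ηg²))·N₀·(2^{(T−t)/(BRβt)} − 1)]
        − a·log(1 + (T−t)/β)
over (0, T] if and only if λ + c ≥ κ, where
κ = aηg / (α + N₀ ln 2/(gBR)). -/
theorem zero_power_threshold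
    (a c lam α β η g R T N₀ B : ℝ)
    (ha : 0 < a) (hc : 0 < c) (hlam : 0 ≤ lam) (hα : 0 < α) (hβ : 0 < β)
    (hη : 0 < η) (hg : 0 < g) (hR : 1 ≤ R) (hT : 0 < T) (hN₀ : 0 < N₀)
    (hB : 0 < B) :
    IsMinOn
      (fun t : ℝ =>
        (lam + c) * (α * (T - t) / (η * β * g)
          + (t / (η * g ^ 2)) * (N₀ * ((2 : ℝ) ^ ((T - t) / (B * R * β * t)) - 1)))
        - a * Real.log (1 + (T - t) / β))
      (Set.Ioc 0 T) T
    ↔ a * η * g / (α + N₀ * Real.log 2 / (g * B * R)) ≤ lam + c := by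
  have hBR : 0 < B * R := mul_pos hB (by linarith)
  have hκ : 0 < α + N₀ * log 2 / (g * B * R) := by positivity
  have hlc : 0 ≤ lam + c := by linarith
  have slope_nonpos_iff :
      a / β - (lam + c) * (α + N₀ * log 2 / (g * B * R)) / (η * β * g) ≤ 0
        ↔ a * η * g / (α + N₀ * log 2 / (g * B * R)) ≤ lam + c := by
    rw [sub_nonpos, show a / β = a * η * g / (η * β * g) by field_simp,
      div_le_div_iff_of_pos_right (by positivity), div_le_iff₀ hκ]
  change IsMinOn (sensorLagrangian a c lam α β η g R T N₀ B) (Ioc 0 T) T ↔ _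
  rw [← slope_nonpos_iff]
  refine ⟨fun hmin => hmin.hasDerivAt_nonpos_of_Ioc hT
    (hasDerivAt_sensorLagrangian_self hβ.ne' hη.ne' hg.ne' hBR.ne' hT.ne'),
    fun hslope => isMinOn_iff.2 fun t ht => ?_⟩
  calc sensorLagrangian a c lam α β η g R T N₀ B T
      ≤ sensorLagrangian a c lam α β η g R T N₀ B T
        + (a / β - (lam + c) * (α + N₀ * log 2 / (g * B * R)) / (η * β * g)) * (t - T) :=
        le_add_of_nonneg_right (mul_nonneg_of_nonpos_of_nonpos hslope (by linarith [ht.2]))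
    _ ≤ sensorLagrangian a c lam α β η g R T N₀ B t :=
        sensorLagrangian_self_add_deriv_mul_le ha.le hlc hβ hη hg hN₀.le ht
end

section
/- For any fixed ℓ > 0, ε > 0, g > 0, N₀ > 0, B > 0, q_r ≥ 0, q_s ≥ 0, q_c ≥ 0, the function (R, t) ↦ (q_r + q_s + q_c·(e^{εR} − e^{ε}))·ℓ + (t/g)·N₀·(2^{ℓ/(B t R)} − 1) is jointly convex on {(R, t) : R > 0, t > 0}. (Lemma 4: Problem P1-B, the joint optimization of compression and transmission, is a convex optimization problem; the joint convexity of the transmission term follows from the perspective-function property.) -/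
/-! The compression term is a constant plus a nonnegative multiple of `R ↦ exp (ε R)`. The
transmission term is `t · h (c / (t R))` with `h y = N₀ (2^y − 1) / g` convex and nondecreasing
on `[0, ∞)`: the perspective of `h` evaluated at the convex function `c / R`. For convex
combinations `T = ∑ aᵢ tᵢ`, `X = ∑ aᵢ Rᵢ` put `wᵢ = aᵢ tᵢ / T`; convexity of `x ↦ x⁻¹` gives
`c / (T X) ≤ ∑ wᵢ c / (tᵢ Rᵢ)`, and monotonicity and convexity of `h` then give
`T h (c / (T X)) ≤ ∑ aᵢ tᵢ h (c / (tᵢ Rᵢ))`. -/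

open Set

theorem convexOn_mul_comp_div_mul {h : ℝ → ℝ} (hh : ConvexOn ℝ (Ici 0) h)
    (hmono : MonotoneOn h (Ici 0)) {c : ℝ} (hc : 0 ≤ c) :
    ConvexOn ℝ {p : ℝ × ℝ | 0 < p.1 ∧ 0 < p.2} (fun p => p.2 * h (c / (p.2 * p.1))) := by
  refine ⟨(convex_Ioi 0).prod (convex_Ioi 0), ?_⟩
  rintro ⟨R₁, t₁⟩ ⟨hR₁ : 0 < R₁, ht₁ : 0 < t₁⟩ ⟨R₂, t₂⟩ ⟨hR₂ : 0 < R₂, ht₂ : 0 < t₂⟩ a b ha hb hab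
  simp only [Prod.smul_mk, Prod.mk_add_mk, smul_eq_mul]
  set T := a * t₁ + b * t₂
  set X := a * R₁ + b * R₂
  have hT : 0 < T := by simpa using (convex_Ioi (0 : ℝ)) ht₁ ht₂ ha hb hab
  have hX : 0 < X := by simpa using (convex_Ioi (0 : ℝ)) hR₁ hR₂ ha hb hab
  have hX_inv : X⁻¹ ≤ a * R₁⁻¹ + b * R₂⁻¹ := by
    simpa using (convexOn_zpow (𝕜 := ℝ) (-1)).2 hR₁ hR₂ ha hb hab
  set w₁ := a * t₁ / T
  set w₂ := b * t₂ / T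
  have hw₁ : 0 ≤ w₁ := div_nonneg (mul_nonneg ha ht₁.le) hT.le
  have hw₂ : 0 ≤ w₂ := div_nonneg (mul_nonneg hb ht₂.le) hT.le
  have hw : w₁ + w₂ = 1 := by rw [← add_div, div_self hT.ne']
  have hu₁ : 0 ≤ c / (t₁ * R₁) := by positivity
  have hu₂ : 0 ≤ c / (t₂ * R₂) := by positivity
  have harg : c / (T * X) ≤ w₁ * (c / (t₁ * R₁)) + w₂ * (c / (t₂ * R₂)) := by
    have hlhs : c / (T * X) = c / T * X⁻¹ := by rw [div_mul_eq_div_div, div_eq_mul_inv]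
    have hrhs : w₁ * (c / (t₁ * R₁)) + w₂ * (c / (t₂ * R₂)) = c / T * (a * R₁⁻¹ + b * R₂⁻¹) := by
      simp only [w₁, w₂]
      field_simp
    rw [hlhs, hrhs]
    exact mul_le_mul_of_nonneg_left hX_inv (div_nonneg hc hT.le)
  calc T * h (c / (T * X))
      ≤ T * h (w₁ * (c / (t₁ * R₁)) + w₂ * (c / (t₂ * R₂))) := by
        refine mul_le_mul_of_nonneg_left (hmono ?_ ?_ harg) hT.le
        · exact div_nonneg hc (mul_pos hT hX).le
        · exact (convex_Ici 0) hu₁ hu₂ hw₁ hw₂ hw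
    _ ≤ T * (w₁ * h (c / (t₁ * R₁)) + w₂ * h (c / (t₂ * R₂))) :=
        mul_le_mul_of_nonneg_left (hh.2 hu₁ hu₂ hw₁ hw₂ hw) hT.le
    _ = a * (t₁ * h (c / (t₁ * R₁))) + b * (t₂ * h (c / (t₂ * R₂))) := by
        simp only [w₁, w₂]
        field_simp

theorem P1B_objective_convex_general
    (ℓ ε g N₀ B qr qs qc : ℝ)
    (hℓ : 0 < ℓ) (hg : 0 < g) (hN₀ : 0 < N₀) (hB : 0 < B)
    (hqc : 0 ≤ qc) :
    ConvexOn ℝ {p : ℝ × ℝ | 0 < p.1 ∧ 0 < p.2}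
      (fun p : ℝ × ℝ =>
        (qr + qs + qc * (Real.exp (ε * p.1) - Real.exp ε)) * ℓ
        + (p.2 / g) * (N₀ * ((2 : ℝ) ^ (ℓ / (B * p.2 * p.1)) - 1))) := by
  have hcompression : ConvexOn ℝ univ
      (fun R => (qc * ℓ) • Real.exp (ε * R) + (qr + qs - qc * Real.exp ε) * ℓ) :=
    ((convexOn_exp.comp_linearMap (LinearMap.mul ℝ ℝ ε)).smul (by positivity)).add_const _
  have hrate : ConvexOn ℝ (Ici 0) fun y : ℝ => N₀ / g * (2 ^ y - 1) :=
    ((((convexOn_rpow_left two_pos).add_const (-1)).smul (by positivity : 0 ≤ N₀ / g)).subset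
      (subset_univ _) (convex_Ici 0)).congr fun y _ => by
        simp only [Pi.add_apply, smul_eq_mul, sub_eq_add_neg]
  have htransmission := convexOn_mul_comp_div_mul hrate
    (fun x _ y _ hxy => by
      dsimp only
      gcongr
      exact one_le_two)
    (by positivity : 0 ≤ ℓ / B)
  refine ((hcompression.comp_linearMap (LinearMap.fst ℝ ℝ ℝ)).subset (subset_univ _)
    htransmission.1 |>.add htransmission).congr fun ⟨R, t⟩ _ => ?_
  simp only [Function.comp_apply, Pi.add_apply, LinearMap.fst_apply, smul_eq_mul, div_div,
    ← mul_assoc]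
  ring

/-- Lemma 4: for fixed ℓ > 0, the P1-B objective
(R, t) ↦ (q_r + q_s + q_c·(e^{εR} − e^{ε}))·ℓ + (t/g)·N₀·(2^{ℓ/(BtR)} − 1)
is jointly convex on {(R, t) : R > 0, t > 0}. -/
theorem P1B_objective_convex
    (ℓ ε g N₀ B qr qs qc : ℝ)
    (hℓ : 0 < ℓ) (hε : 0 < ε) (hg : 0 < g) (hN₀ : 0 < N₀) (hB : 0 < B)
    (hqr : 0 ≤ qr) (hqs : 0 ≤ qs) (hqc : 0 ≤ qc) :
    ConvexOn ℝ {p : ℝ × ℝ | 0 < p.1 ∧ 0 < p.2}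
      (fun p : ℝ × ℝ =>
        (qr + qs + qc * (Real.exp (ε * p.1) - Real.exp ε)) * ℓ
        + (p.2 / g) * (N₀ * ((2 : ℝ) ^ (ℓ / (B * p.2 * p.1)) - 1))) :=
  P1B_objective_convex_general ℓ ε g N₀ B qr qs qc hℓ hg hN₀ hB hqc
end

section
/- Let T > 0, ℓ > 0, s > 0, f_c > 0, ε > 0, g > 0, N₀ > 0, B > 0, q_c > 0, R_max ≥ 1, and suppose d(R) = T/ℓ − 1/s − (e^{εR} − e^{ε})/f_c > 0 for all R ∈ [1, R_max]. Then the function z(R) = (q_c − G(1/(d(R)R))/(g·f_c))·ε e^{εR} − f′(1/(d(R)R))/(g·R²) is strictly increasing on [1, R_max]. (Lemma 6.) -/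
/-- f′(x) = (N₀ ln 2 / B)·2^{x/B}. -/
noncomputable def fTx' (N₀ B x : ℝ) : ℝ := N₀ * Real.log 2 / B * (2 : ℝ) ^ (x / B)

/-- G(x) = f(x) − x f′(x). -/
noncomputable def GG (N₀ B x : ℝ) : ℝ := fTx N₀ B x - x * fTx' N₀ B x

/-- d(R) = T/ℓ − 1/s − (e^{εR} − e^{ε})/f_c. -/
noncomputable def dd (T ℓ s fc ε R : ℝ) : ℝ :=
  T / ℓ - 1 / s - (Real.exp (ε * R) - Real.exp ε) / fc

/-- z(R) = (q_c − G(1/(d(R)R))/(g f_c))·ε e^{εR} − f′(1/(d(R)R))/(g R²). -/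
noncomputable def zP1B (T ℓ s fc ε g N₀ B qc R : ℝ) : ℝ :=
  (qc - GG N₀ B (1 / (dd T ℓ s fc ε R * R)) / (g * fc)) * (ε * Real.exp (ε * R))
    - fTx' N₀ B (1 / (dd T ℓ s fc ε R * R)) / (g * R ^ 2)

open Real

lemma hasDerivAt_two_rpow_div (B x : ℝ) :
    HasDerivAt (fun x : ℝ => (2 : ℝ) ^ (x / B)) (log 2 / B * (2 : ℝ) ^ (x / B)) x := by
  have h := (hasStrictDerivAt_const_rpow two_pos (x / B)).hasDerivAt.comp x
    ((hasDerivAt_id x).div_const B)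
  exact h.congr_deriv (by ring)

lemma hasDerivAt_fTx (N₀ B x : ℝ) : HasDerivAt (fTx N₀ B) (fTx' N₀ B x) x :=
  (((hasDerivAt_two_rpow_div B x).sub_const 1).const_mul N₀).congr_deriv (by unfold fTx'; ring)

lemma hasDerivAt_fTx' (N₀ B x : ℝ) :
    HasDerivAt (fTx' N₀ B) (log 2 / B * fTx' N₀ B x) x :=
  ((hasDerivAt_two_rpow_div B x).const_mul (N₀ * log 2 / B)).congr_deriv (by unfold fTx'; ring)

lemma hasDerivAt_GG (N₀ B x : ℝ) :
    HasDerivAt (GG N₀ B) (-(x * (log 2 / B * fTx' N₀ B x))) x :=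
  ((hasDerivAt_fTx N₀ B x).sub ((hasDerivAt_id x).mul (hasDerivAt_fTx' N₀ B x))).congr_deriv
    (by simp only [id_eq]; ring)

lemma fTx'_pos {N₀ B : ℝ} (hN₀ : 0 < N₀) (hB : 0 < B) (x : ℝ) : 0 < fTx' N₀ B x := by
  unfold fTx'
  have := log_pos one_lt_two
  positivity

/-- With `y = x ln 2 / B` one has `G(x) = N₀ eʸ (1 - y - e⁻ʸ)`, and `e⁻ʸ ≥ 1 - y`. -/
lemma GG_nonpos {N₀ : ℝ} (hN₀ : 0 ≤ N₀) (B x : ℝ) : GG N₀ B x ≤ 0 := by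
  unfold GG fTx fTx'
  rw [rpow_def_of_pos two_pos]
  set y := log 2 * (x / B)
  have hexp : 1 - y ≤ exp (-y) := by linarith [add_one_le_exp (-y)]
  have hG : N₀ * (exp y - 1) - x * (N₀ * log 2 / B * exp y)
      = N₀ * (exp y * (1 - y - exp (-y))) := by
    have : exp y * exp (-y) = 1 := by rw [← exp_add, add_neg_cancel, exp_zero]
    unfold y
    linear_combination N₀ * this
  rw [hG]
  exact mul_nonpos_of_nonneg_of_nonpos hN₀
    (mul_nonpos_of_nonneg_of_nonpos (exp_pos y).le (by linarith))

section

variable (T ℓ s fc ε g N₀ B qc : ℝ)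

lemma hasDerivAt_dd (R : ℝ) :
    HasDerivAt (dd T ℓ s fc ε) (-(ε * exp (ε * R)) / fc) R := by
  have h := (hasDerivAt_const R (T / ℓ - 1 / s)).sub
    (((((hasDerivAt_id R).const_mul ε).exp).sub_const (exp ε)).div_const fc)
  exact h.congr_deriv (by simp only [id_eq]; ring)

lemma hasDerivAt_one_div_dd_mul {R : ℝ} (hR : R ≠ 0) (hd : dd T ℓ s fc ε R ≠ 0) :
    HasDerivAt (fun r => 1 / (dd T ℓ s fc ε r * r))
      ((ε * R * exp (ε * R) / fc - dd T ℓ s fc ε R) / (dd T ℓ s fc ε R * R) ^ 2) R :=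
  ((hasDerivAt_const R 1).div ((hasDerivAt_dd T ℓ s fc ε R).mul (hasDerivAt_id R))
    (mul_ne_zero hd hR)).congr_deriv (by simp only [Pi.mul_apply, id_eq]; ring)

noncomputable def zP1BDeriv (R : ℝ) : ℝ :=
  (qc - GG N₀ B (1 / (dd T ℓ s fc ε R * R)) / (g * fc)) * (ε ^ 2 * exp (ε * R))
    + log 2 / B * fTx' N₀ B (1 / (dd T ℓ s fc ε R * R))
        * (ε * R * exp (ε * R) / fc - dd T ℓ s fc ε R) ^ 2
        / (g * R ^ 2 * dd T ℓ s fc ε R * (dd T ℓ s fc ε R * R) ^ 2)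
    + 2 * fTx' N₀ B (1 / (dd T ℓ s fc ε R * R)) / (g * R ^ 3)

lemma hasDerivAt_zP1B {R : ℝ} (hg : g ≠ 0) (hR : R ≠ 0)
    (hd : dd T ℓ s fc ε R ≠ 0) :
    HasDerivAt (zP1B T ℓ s fc ε g N₀ B qc) (zP1BDeriv T ℓ s fc ε g N₀ B qc R) R := by
  have hu := hasDerivAt_one_div_dd_mul T ℓ s fc ε hR hd
  have hG := (hasDerivAt_GG N₀ B _).comp R hu
  have hf := (hasDerivAt_fTx' N₀ B _).comp R hu
  have hz := ((hG.div_const (g * fc)).const_sub qc).mul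
      ((((hasDerivAt_id R).const_mul ε).exp).const_mul ε)
    |>.sub (hf.div ((hasDerivAt_pow 2 R).const_mul g) (by positivity))
  refine hz.congr_deriv ?_
  unfold zP1BDeriv
  simp only [Function.comp_apply, id_eq]
  field_simp
  ring

lemma zP1BDeriv_pos {R : ℝ} (hfc : 0 < fc) (hε : 0 < ε) (hg : 0 < g) (hN₀ : 0 < N₀)
    (hB : 0 < B) (hqc : 0 < qc) (hR : 0 < R) (hd : 0 < dd T ℓ s fc ε R) :
    0 < zP1BDeriv T ℓ s fc ε g N₀ B qc R := by
  unfold zP1BDeriv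
  have hG := GG_nonpos hN₀.le B (1 / (dd T ℓ s fc ε R * R))
  have hf := fTx'_pos hN₀ hB (1 / (dd T ℓ s fc ε R * R))
  have hA : 0 < qc - GG N₀ B (1 / (dd T ℓ s fc ε R * R)) / (g * fc) := by
    have : GG N₀ B (1 / (dd T ℓ s fc ε R * R)) / (g * fc) ≤ 0 :=
      div_nonpos_of_nonpos_of_nonneg hG (by positivity)
    linarith
  have := log_pos one_lt_two
  positivity

end

theorem z_strictly_increasing_general
    (T ℓ s fc ε g N₀ B qc Rmax : ℝ)
    (hfc : 0 < fc) (hε : 0 < ε)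
    (hg : 0 < g) (hN₀ : 0 < N₀) (hB : 0 < B) (hqc : 0 < qc)
    (hd : ∀ R ∈ Set.Icc (1 : ℝ) Rmax, 0 < dd T ℓ s fc ε R) :
    StrictMonoOn (zP1B T ℓ s fc ε g N₀ B qc) (Set.Icc 1 Rmax) := by
  have hR : ∀ R ∈ Set.Icc (1 : ℝ) Rmax, 0 < R := fun R hR => one_pos.trans_le hR.1
  have hz : ∀ R ∈ Set.Icc (1 : ℝ) Rmax,
      HasDerivAt (zP1B T ℓ s fc ε g N₀ B qc) (zP1BDeriv T ℓ s fc ε g N₀ B qc R) R :=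
    fun R hRI => hasDerivAt_zP1B T ℓ s fc ε g N₀ B qc hg.ne' (hR R hRI).ne' (hd R hRI).ne'
  exact strictMonoOn_of_hasDerivWithinAt_pos (convex_Icc 1 Rmax)
    (fun R hRI => (hz R hRI).continuousAt.continuousWithinAt)
    (fun R hRI => (hz R (interior_subset hRI)).hasDerivWithinAt)
    (fun R hRI => zP1BDeriv_pos T ℓ s fc ε g N₀ B qc hfc hε hg hN₀ hB hqc
      (hR R (interior_subset hRI)) (hd R (interior_subset hRI)))

/-- Lemma 6: the stationarity function z of problem P1-B is
strictly increasing on [1, R_max], provided d(R) > 0 there. -/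
theorem z_strictly_increasing
    (T ℓ s fc ε g N₀ B qc Rmax : ℝ)
    (hT : 0 < T) (hℓ : 0 < ℓ) (hs : 0 < s) (hfc : 0 < fc) (hε : 0 < ε)
    (hg : 0 < g) (hN₀ : 0 < N₀) (hB : 0 < B) (hqc : 0 < qc)
    (hRmax : 1 ≤ Rmax)
    (hd : ∀ R ∈ Set.Icc (1 : ℝ) Rmax, 0 < dd T ℓ s fc ε R) :
    StrictMonoOn (zP1B T ℓ s fc ε g N₀ B qc) (Set.Icc 1 Rmax) :=
  z_strictly_increasing_general T ℓ s fc ε g N₀ B qc Rmax hfc hε hg hN₀ hB hqc hd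
end

section
/- For any fixed ℓ > 0, R > 0, g > 0, N₀ > 0, B > 0, the function t ↦ (t/g)·N₀·(2^{ℓ/(B t R)} − 1) is strictly decreasing on (0, ∞). Consequently, at any minimizer (R*, t*) of the P1-B objective (q_r + q_s + q_c(e^{εR} − e^{ε}))·ℓ + (t/g)·N₀·(2^{ℓ/(B t R)} − 1) over {(R, t) : R ∈ [1, R_max], t > 0, t + ℓ(e^{εR} − e^{ε})/f_c + ℓ/s ≤ T}, the time constraint is tight: t* = T − ℓ(e^{εR*} − e^{ε})/f_c − ℓ/s. (Proposition 4, part 1: full utilization of the crowd-sensing duration.) -/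
open Real Set

theorem strictMonoOn_exp_sub_one_div : StrictMonoOn (fun x : ℝ => (exp x - 1) / x) (Ioi 0) := by
  intro x hx y hy hxy
  simpa only [exp_zero, sub_zero] using
    strictConvexOn_exp.secant_strict_mono (mem_univ 0) (mem_univ x) (mem_univ y)
      hx.ne' hy.ne' hxy

theorem strictAntiOn_mul_exp_div_sub_one {c : ℝ} (hc : 0 < c) :
    StrictAntiOn (fun t : ℝ => t * (exp (c / t) - 1)) (Ioi 0) := by
  have hslope : ∀ t ∈ Ioi (0 : ℝ), t * (exp (c / t) - 1) = c * ((exp (c / t) - 1) / (c / t)) :=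
    fun t ht => by field_simp [(mem_Ioi.mp ht).ne']
  intro t₁ ht₁ t₂ ht₂ ht
  simp only [hslope t₁ ht₁, hslope t₂ ht₂]
  exact mul_lt_mul_of_pos_left (strictMonoOn_exp_sub_one_div (div_pos hc ht₂) (div_pos hc ht₁)
    (div_lt_div_of_pos_left hc ht₁ ht)) hc

theorem div_mul_fTx_div_eq (ℓ R g N₀ B t : ℝ) :
    t / g * fTx N₀ B (ℓ / (t * R)) = N₀ / g * (t * (exp (log 2 * ℓ / (R * B) / t) - 1)) := by
  rw [fTx, rpow_def_of_pos two_pos]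
  ring_nf

theorem strictAntiOn_div_mul_fTx_div {ℓ R g N₀ B : ℝ} (hℓ : 0 < ℓ) (hR : 0 < R) (hg : 0 < g)
    (hN₀ : 0 < N₀) (hB : 0 < B) :
    StrictAntiOn (fun t : ℝ => t / g * fTx N₀ B (ℓ / (t * R))) (Ioi 0) := by
  have hc : 0 < log 2 * ℓ / (R * B) := by positivity
  intro t₁ ht₁ t₂ ht₂ ht
  simp only [div_mul_fTx_div_eq]
  exact mul_lt_mul_of_pos_left (strictAntiOn_mul_exp_div_sub_one hc ht₁ ht₂ ht) (by positivity)

theorem IsMinOn.snd_eq_of_strictAntiOn {α : Type*} {F : α × ℝ → ℝ} {K : Set (α × ℝ)}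
    {s : Set ℝ} {p : α × ℝ} {τ : ℝ} (hmin : IsMinOn F K p) (hτK : (p.1, τ) ∈ K)
    (hanti : StrictAntiOn (fun t => F (p.1, t)) s) (hp : p.2 ∈ s) (hτ : τ ∈ s) (hle : p.2 ≤ τ) :
    p.2 = τ := by
  refine hle.eq_of_not_lt fun hlt => ?_
  exact (hanti hp hτ hlt).not_ge (hmin hτK)

theorem time_constraint_tight_at_optimum_general
    (ℓ R g N₀ B s fc ε qr qs qc Rmax T : ℝ)
    (hℓ : 0 < ℓ) (hR : 0 < R) (hg : 0 < g) (hN₀ : 0 < N₀) (hB : 0 < B) :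
    StrictAntiOn (fun t : ℝ => (t / g) * fTx N₀ B (ℓ / (t * R))) (Set.Ioi 0) ∧
    ∀ p : ℝ × ℝ,
      p ∈ {q : ℝ × ℝ | q.1 ∈ Set.Icc 1 Rmax ∧ 0 < q.2 ∧
            q.2 + ℓ * (Real.exp (ε * q.1) - Real.exp ε) / fc + ℓ / s ≤ T} →
      IsMinOn
        (fun q : ℝ × ℝ =>
          (qr + qs + qc * (Real.exp (ε * q.1) - Real.exp ε)) * ℓ
            + (q.2 / g) * fTx N₀ B (ℓ / (q.2 * q.1)))
        {q : ℝ × ℝ | q.1 ∈ Set.Icc 1 Rmax ∧ 0 < q.2 ∧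
            q.2 + ℓ * (Real.exp (ε * q.1) - Real.exp ε) / fc + ℓ / s ≤ T} p →
      p.2 = T - ℓ * (Real.exp (ε * p.1) - Real.exp ε) / fc - ℓ / s := by
  refine ⟨strictAntiOn_div_mul_fTx_div hℓ hR hg hN₀ hB, ?_⟩
  rintro p ⟨hpR, hpt, hpT⟩ hmin
  set τ := T - ℓ * (Real.exp (ε * p.1) - Real.exp ε) / fc - ℓ / s
  have hle : p.2 ≤ τ := by linarith
  have hτ : 0 < τ := hpt.trans_le hle
  have hanti : StrictAntiOn (fun t => (qr + qs + qc * (Real.exp (ε * p.1) - Real.exp ε)) * ℓ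
      + t / g * fTx N₀ B (ℓ / (t * p.1))) (Ioi 0) :=
    (strictAntiOn_div_mul_fTx_div hℓ (zero_lt_one.trans_le hpR.1) hg hN₀ hB).const_add _
  exact hmin.snd_eq_of_strictAntiOn ⟨hpR, hτ, by linarith⟩ hanti hpt hτ hle

/-- Proposition 4, part 1: for fixed ℓ, R, g, the transmission
energy t ↦ (t/g)·N₀·(2^{ℓ/(BtR)} − 1) is strictly decreasing on (0, ∞);
consequently, at any minimizer of the P1-B objective over the constraint set,
the time constraint is tight. -/
theorem time_constraint_tight_at_optimum
    (ℓ R g N₀ B s fc ε qr qs qc Rmax T : ℝ)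
    (hℓ : 0 < ℓ) (hR : 0 < R) (hg : 0 < g) (hN₀ : 0 < N₀) (hB : 0 < B)
    (hs : 0 < s) (hfc : 0 < fc) (hε : 0 < ε)
    (hqr : 0 ≤ qr) (hqs : 0 ≤ qs) (hqc : 0 ≤ qc)
    (hRmax : 1 ≤ Rmax) (hT : 0 < T) :
    StrictAntiOn (fun t : ℝ => (t / g) * fTx N₀ B (ℓ / (t * R))) (Set.Ioi 0) ∧
    ∀ p : ℝ × ℝ,
      p ∈ {q : ℝ × ℝ | q.1 ∈ Set.Icc 1 Rmax ∧ 0 < q.2 ∧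
            q.2 + ℓ * (Real.exp (ε * q.1) - Real.exp ε) / fc + ℓ / s ≤ T} →
      IsMinOn
        (fun q : ℝ × ℝ =>
          (qr + qs + qc * (Real.exp (ε * q.1) - Real.exp ε)) * ℓ
            + (q.2 / g) * fTx N₀ B (ℓ / (q.2 * q.1)))
        {q : ℝ × ℝ | q.1 ∈ Set.Icc 1 Rmax ∧ 0 < q.2 ∧
            q.2 + ℓ * (Real.exp (ε * q.1) - Real.exp ε) / fc + ℓ / s ≤ T} p →
      p.2 = T - ℓ * (Real.exp (ε * p.1) - Real.exp ε) / fc - ℓ / s :=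
  time_constraint_tight_at_optimum_general ℓ R g N₀ B s fc ε qr qs qc Rmax T hℓ hR hg hN₀ hB
end

section
/- For any fixed u > 0, ε > 0, g > 0, N₀ > 0, B > 0, q_r, q_s, q_c ≥ 0, the function (r, t) ↦ u·r·(q_r + q_s + q_c(e^{ε r²} − e^{ε})) + (t/g)·N₀·(2^{u/(B t r)} − 1) is jointly convex on {(r, t) : r > 0, t > 0}. (Convexity of Problem P5, the lossy-compression counterpart of Problem P1-B, asserted in Section IV.) -/
/-!
The sensing and compression energy depends on `r` alone: it is affine in `r` plus the nonnegative
multiple `u q_c` of `r e^{ε r²}`, a product of two nonnegative nondecreasing convex functions on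
`r ≥ 0`. Writing `2^x = e^{x log 2}`, the transmission energy is, up to a term linear in `t`,
`N₀/g · t e^{a/(r t)}` with `a = u log 2 / B ≥ 0`. This is the perspective `(w, t) ↦ t e^{w/t}` of
`exp`, which is convex and nondecreasing in `w`, evaluated at the convex function `w = a/r`.
-/

open Real Set

lemma perspective_weights {E : Type*} [AddCommGroup E] [Module ℝ E] {x₁ x₂ : E} {t₁ t₂ a b : ℝ}
    (ht₁ : 0 < t₁) (ht₂ : 0 < t₂) (ha : 0 ≤ a) (hb : 0 ≤ b) (hab : a + b = 1) :
    0 < a * t₁ + b * t₂ ∧ a * t₁ / (a * t₁ + b * t₂) + b * t₂ / (a * t₁ + b * t₂) = 1 ∧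
      (a * t₁ + b * t₂)⁻¹ • (a • x₁ + b • x₂) =
        (a * t₁ / (a * t₁ + b * t₂)) • (t₁⁻¹ • x₁) + (b * t₂ / (a * t₁ + b * t₂)) • (t₂⁻¹ • x₂) := by
  have hT : 0 < a * t₁ + b * t₂ := convex_Ioi (0 : ℝ) ht₁ ht₂ ha hb hab
  refine ⟨hT, by field_simp, ?_⟩
  simp only [smul_smul, smul_add]
  congr 2 <;> field_simp

theorem ConvexOn.perspective {E : Type*} [AddCommGroup E] [Module ℝ E] {s : Set E} {f : E → ℝ}
    (hf : ConvexOn ℝ s f) :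
    ConvexOn ℝ {p : E × ℝ | 0 < p.2 ∧ p.2⁻¹ • p.1 ∈ s} fun p => p.2 * f (p.2⁻¹ • p.1) := by
  refine ⟨?_, ?_⟩
  · rintro ⟨x₁, t₁⟩ ⟨ht₁, hx₁⟩ ⟨x₂, t₂⟩ ⟨ht₂, hx₂⟩ a b ha hb hab
    obtain ⟨hT, hw, hx⟩ := perspective_weights (x₁ := x₁) (x₂ := x₂) ht₁ ht₂ ha hb hab
    simp only [mem_ofPred_eq, Prod.fst_add, Prod.snd_add, Prod.smul_fst, Prod.smul_snd, smul_eq_mul]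
    exact ⟨hT, hx ▸ hf.1 hx₁ hx₂ (by positivity) (by positivity) hw⟩
  · rintro ⟨x₁, t₁⟩ ⟨ht₁, hx₁⟩ ⟨x₂, t₂⟩ ⟨ht₂, hx₂⟩ a b ha hb hab
    obtain ⟨hT, hw, hx⟩ := perspective_weights (x₁ := x₁) (x₂ := x₂) ht₁ ht₂ ha hb hab
    simp only [Prod.fst_add, Prod.snd_add, Prod.smul_fst, Prod.smul_snd, smul_eq_mul, hx]
    calc (a * t₁ + b * t₂) * f ((a * t₁ / (a * t₁ + b * t₂)) • (t₁⁻¹ • x₁) +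
            (b * t₂ / (a * t₁ + b * t₂)) • (t₂⁻¹ • x₂))
        ≤ (a * t₁ + b * t₂) * (a * t₁ / (a * t₁ + b * t₂) * f (t₁⁻¹ • x₁) +
            b * t₂ / (a * t₁ + b * t₂) * f (t₂⁻¹ • x₂)) :=
          mul_le_mul_of_nonneg_left (hf.2 hx₁ hx₂ (by positivity) (by positivity) hw) hT.le
      _ = a * (t₁ * f (t₁⁻¹ • x₁)) + b * (t₂ * f (t₂⁻¹ • x₂)) := by field_simp

theorem ConvexOn.exp {E : Type*} [AddCommGroup E] [Module ℝ E] {s : Set E} {f : E → ℝ}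
    (hf : ConvexOn ℝ s f) : ConvexOn ℝ s fun x => exp (f x) :=
  ⟨hf.1, fun _ hx _ hy _ _ ha hb hab => (exp_le_exp.2 (hf.2 hx hy ha hb hab)).trans
    (convexOn_exp.2 (mem_univ _) (mem_univ _) ha hb hab)⟩

lemma convexOn_mul_exp_mul_sq {ε : ℝ} (hε : 0 ≤ ε) :
    ConvexOn ℝ (Ici 0) fun x : ℝ => x * exp (ε * x ^ 2) := by
  have hexp : ConvexOn ℝ (Ici 0) fun x : ℝ => exp (ε * x ^ 2) := by
    simpa only [smul_eq_mul] using ((convexOn_pow 2).smul hε).exp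
  have hmono : MonotoneOn (fun x : ℝ => exp (ε * x ^ 2)) (Ici 0) := fun x hx _ _ hxy =>
    exp_le_exp.2 (mul_le_mul_of_nonneg_left (pow_le_pow_left₀ hx hxy 2) hε)
  exact (convexOn_id (convex_Ici 0)).mul hexp (fun x hx => hx) (fun x _ => (exp_pos _).le)
    (monotoneOn_id.monovaryOn hmono)

lemma convexOn_mul_exp_div_mul {a : ℝ} (ha : 0 ≤ a) :
    ConvexOn ℝ {p : ℝ × ℝ | 0 < p.1 ∧ 0 < p.2} fun p => p.2 * exp (a / (p.1 * p.2)) := by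
  have hinv : ConvexOn ℝ (Ioi 0) fun r : ℝ => a / r := by
    simpa only [smul_eq_mul, zpow_neg_one, div_eq_mul_inv] using (convexOn_zpow (-1)).smul ha
  have hpersp := convexOn_exp.perspective (s := univ)
  refine ⟨(convex_Ioi 0).prod (convex_Ioi 0), ?_⟩
  rintro ⟨r₁, t₁⟩ ⟨hr₁, ht₁⟩ ⟨r₂, t₂⟩ ⟨hr₂, ht₂⟩ α β hα hβ hαβ
  simp only [Prod.fst_add, Prod.snd_add, Prod.smul_fst, Prod.smul_snd, smul_eq_mul]
  calc (α * t₁ + β * t₂) * exp (a / ((α * r₁ + β * r₂) * (α * t₁ + β * t₂)))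
      ≤ (α * t₁ + β * t₂) * exp ((α * t₁ + β * t₂)⁻¹ * (α * (a / r₁) + β * (a / r₂))) := by
        rw [show ∀ R T : ℝ, a / (R * T) = T⁻¹ * (a / R) by intros; ring]
        gcongr
        exact hinv.2 (mem_Ioi.2 hr₁) (mem_Ioi.2 hr₂) hα hβ hαβ
    _ ≤ α * (t₁ * exp (t₁⁻¹ * (a / r₁))) + β * (t₂ * exp (t₂⁻¹ * (a / r₂))) :=
        hpersp.2 (x := (a / r₁, t₁)) (y := (a / r₂, t₂)) ⟨ht₁, mem_univ _⟩ ⟨ht₂, mem_univ _⟩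
          hα hβ hαβ
    _ = α * (t₁ * exp (a / (r₁ * t₁))) + β * (t₂ * exp (a / (r₂ * t₂))) := by
        field_simp

theorem P5_objective_convex_general
    (u ε g N₀ B qr qs qc : ℝ)
    (hu : 0 < u) (hε : 0 < ε) (hg : 0 < g) (hN₀ : 0 < N₀) (hB : 0 < B)
    (hqc : 0 ≤ qc) :
    ConvexOn ℝ {p : ℝ × ℝ | 0 < p.1 ∧ 0 < p.2}
      (fun p : ℝ × ℝ =>
        u * p.1 * (qr + qs + qc * (Real.exp (ε * p.1 ^ 2) - Real.exp ε))
        + (p.2 / g) * (N₀ * ((2 : ℝ) ^ (u / (B * p.2 * p.1)) - 1))) := by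
  have hquadrant : Convex ℝ {p : ℝ × ℝ | 0 < p.1 ∧ 0 < p.2} := (convex_Ioi 0).prod (convex_Ioi 0)
  have hcompression : ConvexOn ℝ {p : ℝ × ℝ | 0 < p.1 ∧ 0 < p.2}
      fun p => (u * qc) • (p.1 * exp (ε * p.1 ^ 2)) :=
    ((convexOn_mul_exp_mul_sq hε.le).smul (by positivity) |>.comp_linearMap
      (LinearMap.fst ℝ ℝ ℝ)).subset (fun p hp => mem_Ici.2 hp.1.le) hquadrant
  have htransmission := (convexOn_mul_exp_div_mul (a := log 2 * (u / B)) (by positivity)).smul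
    (c := N₀ / g) (by positivity)
  have hlinear := LinearMap.convexOn ((u * (qr + qs) - u * qc * exp ε) • LinearMap.fst ℝ ℝ ℝ
    - (N₀ / g) • LinearMap.snd ℝ ℝ ℝ) hquadrant
  refine ((hcompression.add htransmission).add hlinear).congr fun p _ => ?_
  simp only [Pi.add_apply, smul_eq_mul, LinearMap.sub_apply, LinearMap.smul_apply,
    LinearMap.fst_apply, LinearMap.snd_apply, rpow_def_of_pos two_pos]
  field_simp
  ring

/-- convexity of problem P5: for fixed data utility u > 0, the
lossy-compression objective
(r, t) ↦ u·r·(q_r + q_s + q_c(e^{εr²} − e^{ε})) + (t/g)·N₀·(2^{u/(Btr)} − 1)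
is jointly convex on {(r, t) : r > 0, t > 0}. -/
theorem P5_objective_convex
    (u ε g N₀ B qr qs qc : ℝ)
    (hu : 0 < u) (hε : 0 < ε) (hg : 0 < g) (hN₀ : 0 < N₀) (hB : 0 < B)
    (hqr : 0 ≤ qr) (hqs : 0 ≤ qs) (hqc : 0 ≤ qc) :
    ConvexOn ℝ {p : ℝ × ℝ | 0 < p.1 ∧ 0 < p.2}
      (fun p : ℝ × ℝ =>
        u * p.1 * (qr + qs + qc * (Real.exp (ε * p.1 ^ 2) - Real.exp ε))
        + (p.2 / g) * (N₀ * ((2 : ℝ) ^ (u / (B * p.2 * p.1)) - 1))) :=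
  P5_objective_convex_general u ε g N₀ B qr qs qc hu hε hg hN₀ hB hqc
end
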